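/- arXiv:cs/0607089 — 13 statements merged into one kernel-verified Lean document; each statement's English description precedes it below -/
import Mathlib

section
/- Let F be a finite field, let k < n be positive integers, and let G be an n×k matrix over the polynomial ring F[s] of full column rank k. Let C = { G·u : u ∈ F[s]^k } ⊆ (F[s])^n be the convolutional code generated by G, and let δ be the maximum of the degrees of the (nonzero) determinants of the k×k submatrices of G (the complexity of C). Then the free distance of C satisfies d_free(C) ≤ (n−k)·(⌊δ/k⌋ + 1) + δ + 1. -/
open Polynomial

/-- The weight of a polynomial vector: total number of nonzero coefficients
occurring among its polynomial entries. -/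
noncomputable def polyVecWeight {F : Type*} [Field F] {n : ℕ}
    (v : Fin n → Polynomial F) : ℕ :=
  ∑ i, (v i).support.card

/-- The free distance of a set of polynomial vectors (a convolutional code):
the minimal weight of a nonzero codeword. -/
noncomputable def freeDist {F : Type*} [Field F] {n : ℕ}
    (C : Set (Fin n → Polynomial F)) : ℕ :=
  sInf {w | ∃ v ∈ C, v ≠ 0 ∧ polyVecWeight v = w}

/-!
Column reduction by unimodular column operations turns `G` into a generator `H = G V` of the
same code whose column degrees `e i` satisfy `∑ e i ≤ δ`: for a column-reduced matrix the
high-order coefficient matrix has a nonzero `k × k` minor, and it is the coefficient of degree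
`∑ e i` of the corresponding minor of `H`. With `ℓ = δ / k`, the messages `u` with
`deg u i ≤ ℓ - e i` form a space of dimension at least `k (ℓ + 1) - δ ≥ 1` whose codewords `H u`
have all entries of degree `≤ ℓ`, i.e. a linear block code of length `n (ℓ + 1)`. The classical
Singleton bound for that block code is the claim.
-/

open Finset Polynomial

namespace Polynomial

variable {R : Type*}

theorem coeff_prod_sum_of_natDegree_le [CommSemiring R] {ι : Type*} (s : Finset ι)
    (f : ι → R[X]) (e : ι → ℕ) (h : ∀ i ∈ s, (f i).natDegree ≤ e i) :
    (∏ i ∈ s, f i).coeff (∑ i ∈ s, e i) = ∏ i ∈ s, (f i).coeff (e i) := by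
  classical
  induction s using Finset.induction_on with
  | empty => simp
  | insert a s ha ih =>
    have hs : ∀ i ∈ s, (f i).natDegree ≤ e i := fun i hi => h i (mem_insert_of_mem hi)
    rw [prod_insert ha, sum_insert ha, prod_insert ha,
      coeff_mul_add_eq_of_natDegree_le (h a (mem_insert_self a s))
        ((natDegree_prod_le s f).trans (sum_le_sum hs)), ih hs]

theorem coeff_mul_C_mul_X_pow_sub [CommSemiring R] (p : R[X]) (a : R) {d N : ℕ} (h : d ≤ N) :
    (p * (C a * X ^ (N - d))).coeff N = p.coeff d * a := by
  rw [← mul_assoc, coeff_mul_X_pow', if_pos (Nat.sub_le N d), Nat.sub_sub_self h, coeff_mul_C]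

theorem natDegree_mul_C_mul_X_pow_sub_le [Semiring R] {p : R[X]} (a : R) {d N : ℕ}
    (hp : p.natDegree ≤ d) (h : d ≤ N) : (p * (C a * X ^ (N - d))).natDegree ≤ N :=
  calc (p * (C a * X ^ (N - d))).natDegree ≤ d + (N - d) :=
        natDegree_mul_le_of_le hp (natDegree_C_mul_X_pow_le a _)
    _ = N := Nat.add_sub_cancel' h

theorem degree_lt_of_natDegree_le_of_coeff_eq_zero [Semiring R] {p : R[X]} {N : ℕ}
    (hp : p.natDegree ≤ N) (hN : p.coeff N = 0) : p.degree < N := by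
  refine (degree_lt_iff_coeff_zero p N).2 fun t ht => ?_
  rcases ht.eq_or_lt with rfl | ht
  exacts [hN, coeff_eq_zero_of_natDegree_lt (hp.trans_lt ht)]

theorem card_support_eq_card_coeff_ne_zero [Semiring R] [DecidableEq R] {p : R[X]} {ℓ : ℕ}
    (hp : p.natDegree ≤ ℓ) : #p.support = #{t : Fin (ℓ + 1) | p.coeff t ≠ 0} := by
  rw [← card_map Fin.valEmbedding]
  congr 1
  ext t
  simp only [mem_support_iff, mem_map, mem_filter, mem_univ, true_and, Fin.valEmbedding_apply]
  refine ⟨fun ht => ⟨⟨t, Nat.lt_succ_of_le ((le_natDegree_of_ne_zero ht).trans hp)⟩, ht, rfl⟩,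
    ?_⟩
  rintro ⟨t, ht, rfl⟩
  exact ht

end Polynomial

namespace Matrix

theorem coeff_det_sum_of_natDegree_le {R ι : Type*} [CommRing R] [Fintype ι] [DecidableEq ι]
    (M : Matrix ι ι R[X]) (e : ι → ℕ) (h : ∀ i j, (M i j).natDegree ≤ e j) :
    M.det.coeff (∑ j, e j) = (of fun i j => (M i j).coeff (e j)).det := by
  simp only [det_apply, finsetSum_coeff, coeff_smul, of_apply]
  exact sum_congr rfl fun σ _ => by rw [coeff_prod_sum_of_natDegree_le _ _ _ fun j _ => h (σ j) j]

theorem det_one_updateCol {R ι : Type*} [CommRing R] [Fintype ι] [DecidableEq ι]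
    (i : ι) (v : ι → R) : ((1 : Matrix ι ι R).updateCol i v).det = v i := by
  simpa [one_apply] using det_updateCol_sum (1 : Matrix ι ι R) i v

theorem mulVec_mul_injective {R m ι : Type*} [CommRing R] [Fintype ι] [DecidableEq ι]
    {H : Matrix m ι R} {V : Matrix ι ι R} (hH : Function.Injective H.mulVec)
    (hV : IsUnit V.det) : Function.Injective (H * V).mulVec := by
  rw [show (H * V).mulVec = H.mulVec ∘ V.mulVec from funext fun u => (mulVec_mulVec u H V).symm]
  exact hH.comp (mulVec_injective_of_isUnit ((isUnit_iff_isUnit_det V).2 hV))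

theorem exists_strictMono_det_submatrix_ne_zero {F m : Type*} [Field F] [Fintype m]
    [LinearOrder m] {k : ℕ} (M : Matrix m (Fin k) F) (hM : Function.Injective M.mulVec) :
    ∃ r : Fin k → m, StrictMono r ∧ (M.submatrix r id).det ≠ 0 := by
  classical
  have hspan : Submodule.span F (Set.range M.row) = ⊤ := by
    have hrank : M.rank = k := by
      rw [rank, LinearMap.finrank_range_of_inj (f := M.mulVecLin) hM, Module.finrank_fin_fun]
    refine Submodule.eq_top_of_finrank_eq ?_
    rw [← M.rank_eq_finrank_span_row, hrank, Module.finrank_fin_fun]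
  obtain ⟨b, -, -, hb, hind⟩ :=
    exists_linearIndepOn_extension (linearIndepOn_empty F M.row) (Set.empty_subset Set.univ)
  have hcard : b.toFinset.card = k := by
    have hb_span : Submodule.span F (M.row '' b) = ⊤ :=
      eq_top_iff.2 (hspan ▸ Submodule.span_le.2 (Set.image_univ ▸ hb))
    rw [Set.toFinset_card, linearIndependent_iff_card_eq_finrank_span.1 hind, Set.finrank,
      ← Set.image_eq_range, hb_span, finrank_top, Module.finrank_fin_fun]
  let r := b.toFinset.orderEmbOfFin hcard
  refine ⟨r, r.strictMono, ?_⟩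
  have hrows : LinearIndependent F (M.submatrix r id).row :=
    hind.comp (fun i => ⟨r i, Set.mem_toFinset.1 (b.toFinset.orderEmbOfFin_mem hcard i)⟩)
      fun i j hij => r.injective (congrArg Subtype.val hij :)
  exact (isUnit_iff_isUnit_det _).1 (linearIndependent_rows_iff_isUnit.1 hrows) |>.ne_zero

end Matrix

theorem exists_ne_zero_card_support_add_finrank_le {F V ι : Type*} [Field F] [AddCommGroup V]
    [Module F V] [FiniteDimensional F V] [Fintype ι] [DecidableEq F] (f : V →ₗ[F] ι → F)
    (hf : Function.Injective f) (hV : 0 < Module.finrank F V) :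
    ∃ v, f v ≠ 0 ∧ #{i | f v i ≠ 0} + Module.finrank F V ≤ Fintype.card ι + 1 := by
  classical
  have hdim : Module.finrank F V ≤ Fintype.card ι := by
    simpa using LinearMap.finrank_le_finrank_of_injective hf
  obtain ⟨T, -, hT⟩ := exists_subset_card_eq (s := (univ : Finset ι))
    (n := Module.finrank F V - 1) (by rw [card_univ]; omega)
  let restrict : V →ₗ[F] T → F := LinearMap.funLeft F F (↑) ∘ₗ f
  obtain ⟨v, hv, hv0⟩ : ∃ v ∈ LinearMap.ker restrict, v ≠ 0 := by
    refine Submodule.exists_mem_ne_zero_of_ne_bot (LinearMap.ker_ne_bot_of_finrank_lt ?_)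
    rw [Module.finrank_fintype_fun_eq_card, Fintype.card_coe, hT]
    omega
  refine ⟨v, fun h => hv0 (hf (h.trans (map_zero f).symm)), ?_⟩
  have hsupp : ({i | f v i ≠ 0} : Finset ι) ⊆ univ \ T := fun i hi => by
    refine mem_sdiff.2 ⟨mem_univ i, fun hiT => (mem_filter.1 hi).2 ?_⟩
    exact congrFun (LinearMap.mem_ker.1 hv) ⟨i, hiT⟩
  have hcard := card_le_card hsupp
  rw [card_sdiff_of_subset (subset_univ T), card_univ, hT] at hcard
  omega

theorem polyVecWeight_eq_card_coeff_ne_zero {F : Type*} [Field F] [DecidableEq F] {n ℓ : ℕ}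
    {w : Fin n → F[X]} (hw : ∀ j, (w j).natDegree ≤ ℓ) :
    polyVecWeight w = #{p : Fin n × Fin (ℓ + 1) | (w p.1).coeff p.2 ≠ 0} := by
  simp only [polyVecWeight, card_support_eq_card_coeff_ne_zero (hw _), card_filter,
    Fintype.sum_prod_type]

theorem exists_ne_zero_polyVecWeight_add_finrank_le {F V : Type*} [Field F] [AddCommGroup V]
    [Module F V] [FiniteDimensional F V] {n : ℕ} (ℓ : ℕ) (f : V →ₗ[F] Fin n → F[X])
    (hf : Function.Injective f) (hdeg : ∀ v j, (f v j).natDegree ≤ ℓ)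
    (hV : 0 < Module.finrank F V) :
    ∃ v, f v ≠ 0 ∧ polyVecWeight (f v) + Module.finrank F V ≤ n * (ℓ + 1) + 1 := by
  classical
  let coeffs : (Fin n → F[X]) →ₗ[F] Fin n × Fin (ℓ + 1) → F :=
    LinearMap.pi fun p => lcoeff F p.2 ∘ₗ LinearMap.proj p.1
  have hinj : Function.Injective (coeffs ∘ₗ f) := by
    refine (injective_iff_map_eq_zero _).2 fun v hv => hf ?_
    ext j t
    rcases le_or_gt t ℓ with ht | ht
    · simpa [coeffs] using congrFun hv (j, ⟨t, Nat.lt_succ_of_le ht⟩)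
    · simpa using coeff_eq_zero_of_natDegree_lt ((hdeg v j).trans_lt ht)
  obtain ⟨v, hv, hle⟩ := exists_ne_zero_card_support_add_finrank_le _ hinj hV
  refine ⟨v, fun h => hv (by simp [h]), ?_⟩
  rw [polyVecWeight_eq_card_coeff_ne_zero (hdeg v)]
  convert hle <;> simp [coeffs]

namespace Matrix

variable {F m ι : Type*} [Field F] [Fintype m]

noncomputable def colDegree (H : Matrix m ι F[X]) (i : ι) : ℕ :=
  univ.sup fun j => (H j i).natDegree

/-- The high-order coefficient matrix `[H]_hc`. -/
noncomputable def colLeadingCoeff (H : Matrix m ι F[X]) : Matrix m ι F :=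
  of fun j i => (H j i).coeff (H.colDegree i)

def IsColReduced [Fintype ι] (H : Matrix m ι F[X]) : Prop :=
  Function.Injective H.colLeadingCoeff.mulVec

theorem natDegree_le_colDegree (H : Matrix m ι F[X]) (j : m) (i : ι) :
    (H j i).natDegree ≤ H.colDegree i :=
  le_sup (f := fun j => (H j i).natDegree) (mem_univ j)

theorem colDegree_updateCol_ne [DecidableEq ι] (H : Matrix m ι F[X]) {i i' : ι} (w : m → F[X])
    (h : i' ≠ i) : (H.updateCol i w).colDegree i' = H.colDegree i' := by
  simp only [colDegree, updateCol_ne h]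

theorem colDegree_updateCol_self_lt [DecidableEq ι] (H : Matrix m ι F[X]) (i : ι)
    {w : m → F[X]} {N : ℕ} (hw : w ≠ 0) (hdeg : ∀ j, (w j).degree < N) :
    (H.updateCol i w).colDegree i < N := by
  have hlt : ∀ j, w j ≠ 0 → (w j).natDegree < N := fun j hj =>
    (natDegree_lt_iff_degree_lt hj).2 (hdeg j)
  obtain ⟨j₀, hj₀⟩ := Function.ne_iff.1 hw
  have hN : 0 < N := (Nat.zero_le _).trans_lt (hlt j₀ hj₀)
  simp only [colDegree, updateCol_self]
  refine (Finset.sup_lt_iff (bot_lt_iff_ne_bot.2 hN.ne')).2 fun j _ => ?_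
  by_cases hj : w j = 0
  · simpa [hj] using hN
  · exact hlt j hj

theorem exists_isUnit_det_sum_colDegree_mul_lt [Fintype ι] [DecidableEq ι] {H : Matrix m ι F[X]}
    (hH : Function.Injective H.mulVec) {c : ι → F} (hc : c ≠ 0)
    (hHc : H.colLeadingCoeff *ᵥ c = 0) :
    ∃ V : Matrix ι ι F[X], IsUnit V.det ∧ ∑ i, (H * V).colDegree i < ∑ i, H.colDegree i := by
  classical
  set e := H.colDegree
  obtain ⟨i₀, hi₀, hmax⟩ := exists_max_image {i | c i ≠ 0} e
    (filter_nonempty_iff.2 (by simpa [Function.ne_iff] using hc))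
  have hci₀ : c i₀ ≠ 0 := (mem_filter.1 hi₀).2
  have hle : ∀ i, c i ≠ 0 → e i ≤ e i₀ := fun i hi => hmax i (mem_filter.2 ⟨mem_univ i, hi⟩)
  -- shifting column `i` up by `e i₀ - e i` aligns all leading coefficients in degree `e i₀`
  let c' : ι → F[X] := fun i => C (c i) * X ^ (e i₀ - e i)
  have hc' : c' ≠ 0 := Function.ne_iff.2 ⟨i₀, by simp [c', hci₀]⟩
  have hnatDeg : ∀ j, ((H *ᵥ c') j).natDegree ≤ e i₀ := fun j =>
    natDegree_sum_le_of_forall_le _ _ fun i _ => by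
      by_cases hi : c i = 0
      · simp [c', hi]
      · exact natDegree_mul_C_mul_X_pow_sub_le _ (H.natDegree_le_colDegree j i) (hle i hi)
  have hcoeff : ∀ j, ((H *ᵥ c') j).coeff (e i₀) = (H.colLeadingCoeff *ᵥ c) j := fun j => by
    simp only [mulVec, dotProduct, finsetSum_coeff, colLeadingCoeff, of_apply]
    refine sum_congr rfl fun i _ => ?_
    by_cases hi : c i = 0
    · simp [c', hi]
    · exact coeff_mul_C_mul_X_pow_sub _ _ (hle i hi)
  refine ⟨(1 : Matrix ι ι F[X]).updateCol i₀ c', ?_, ?_⟩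
  · rw [det_one_updateCol]
    simpa [c'] using hci₀
  have hlt : (H.updateCol i₀ (H *ᵥ c')).colDegree i₀ < e i₀ :=
    colDegree_updateCol_self_lt H i₀ (fun h => hc' (hH (h.trans (mulVec_zero H).symm))) fun j =>
      degree_lt_of_natDegree_le_of_coeff_eq_zero (hnatDeg j) ((hcoeff j).trans (congrFun hHc j))
  rw [mul_updateCol, Matrix.mul_one]
  refine sum_lt_sum (fun i _ => ?_) ⟨i₀, mem_univ i₀, hlt⟩
  rcases eq_or_ne i i₀ with rfl | hi
  exacts [hlt.le, (colDegree_updateCol_ne H _ hi).le]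

theorem exists_isUnit_det_isColReduced_mul [Fintype ι] [DecidableEq ι] (H : Matrix m ι F[X])
    (hH : Function.Injective H.mulVec) :
    ∃ V : Matrix ι ι F[X], IsUnit V.det ∧ (H * V).IsColReduced := by
  induction hN : ∑ i, H.colDegree i using Nat.strong_induction_on generalizing H with
  | _ N ih =>
  by_cases hred : H.IsColReduced
  · exact ⟨1, by simp, by simpa using hred⟩
  obtain ⟨c, hHc, hc⟩ : ∃ c, H.colLeadingCoeff *ᵥ c = 0 ∧ c ≠ 0 := by
    by_contra! h
    exact hred <| (injective_iff_map_eq_zero H.colLeadingCoeff.mulVecLin).2 h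
  obtain ⟨V, hV, hlt⟩ := exists_isUnit_det_sum_colDegree_mul_lt hH hc hHc
  obtain ⟨W, hW, hred⟩ := ih _ (hN ▸ hlt) (H * V) (mulVec_mul_injective hH hV) rfl
  exact ⟨V * W, by rw [det_mul]; exact hV.mul hW, by rwa [← Matrix.mul_assoc]⟩

theorem IsColReduced.exists_strictMono_sum_colDegree_le [LinearOrder m] {k : ℕ}
    {H : Matrix m (Fin k) F[X]} (hH : H.IsColReduced) :
    ∃ r : Fin k → m, StrictMono r ∧ (H.submatrix r id).det ≠ 0 ∧
      ∑ i, H.colDegree i ≤ (H.submatrix r id).det.natDegree := by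
  obtain ⟨r, hr, hdet⟩ := H.colLeadingCoeff.exists_strictMono_det_submatrix_ne_zero hH
  have hcoeff : (H.submatrix r id).det.coeff (∑ i, H.colDegree i) ≠ 0 := by
    rw [coeff_det_sum_of_natDegree_le (H.submatrix r id) H.colDegree fun a i =>
      H.natDegree_le_colDegree (r a) i]
    exact hdet
  exact ⟨r, hr, fun h => hcoeff (by rw [h, coeff_zero]), le_natDegree_of_ne_zero hcoeff⟩

theorem exists_strictMono_sum_colDegree_mul_le [LinearOrder m] {k : ℕ}
    {G : Matrix m (Fin k) F[X]} {V : Matrix (Fin k) (Fin k) F[X]} (hV : IsUnit V.det)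
    (hred : (G * V).IsColReduced) :
    ∃ r : Fin k → m, StrictMono r ∧ (G.submatrix r id).det ≠ 0 ∧
      ∑ i, (G * V).colDegree i ≤ (G.submatrix r id).det.natDegree := by
  obtain ⟨r, hr, hdet, hle⟩ := hred.exists_strictMono_sum_colDegree_le
  rw [submatrix_mul _ _ _ _ _ Function.bijective_id, submatrix_id_id, det_mul] at hdet hle
  have hGr := left_ne_zero_of_mul hdet
  rw [natDegree_mul hGr hV.ne_zero, natDegree_eq_zero_of_isUnit hV, add_zero] at hle
  exact ⟨r, hr, hGr, hle⟩

theorem exists_mulVec_ne_zero_polyVecWeight_add_le [Fintype ι] {n : ℕ}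
    (H : Matrix (Fin n) ι F[X]) (hH : Function.Injective H.mulVec) (ℓ : ℕ)
    (hpos : 0 < ∑ i, (ℓ + 1 - H.colDegree i)) :
    ∃ u, H *ᵥ u ≠ 0 ∧ polyVecWeight (H *ᵥ u) + ∑ i, (ℓ + 1 - H.colDegree i) ≤ n * (ℓ + 1) + 1 := by
  let U := (i : ι) → degreeLT F (ℓ + 1 - H.colDegree i)
  have : ∀ i, Module.Finite F (degreeLT F (ℓ + 1 - H.colDegree i)) :=
    fun i => .of_basis (degreeLT.basis F _)
  let incl : U →ₗ[F] ι → F[X] := LinearMap.pi fun i => (degreeLT F _).subtype ∘ₗ LinearMap.proj i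
  have hdim : Module.finrank F U = ∑ i, (ℓ + 1 - H.colDegree i) := by
    simp [U, Module.finrank_pi_fintype, Module.finrank_eq_card_basis (degreeLT.basis F _)]
  have hdeg : ∀ u j, ((H *ᵥ incl u) j).natDegree ≤ ℓ := fun u j =>
    natDegree_sum_le_of_forall_le _ _ fun i _ => by
      change (H j i * (u i : F[X])).natDegree ≤ ℓ
      have hlt : (u i : F[X]).degree < ↑(ℓ + 1 - H.colDegree i) := mem_degreeLT.1 (u i).2
      by_cases hu : (u i : F[X]) = 0
      · simp [hu]
      have hu_deg := (natDegree_lt_iff_degree_lt hu).2 hlt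
      have hH_deg := H.natDegree_le_colDegree j i
      exact natDegree_mul_le.trans (by omega)
  obtain ⟨u, hu, hle⟩ := exists_ne_zero_polyVecWeight_add_finrank_le ℓ
    (H.mulVecLin.restrictScalars F ∘ₗ incl)
    (hH.comp fun u v huv => funext fun i => Subtype.ext (congrFun huv i)) hdeg (hdim ▸ hpos)
  exact ⟨incl u, hu, hdim ▸ hle⟩

end Matrix

theorem generalized_singleton_bound_general {F : Type*} [Field F] {n k : ℕ}
    (hk : 0 < k) (hkn : k < n)
    (G : Matrix (Fin n) (Fin k) (Polynomial F))
    (hfull : Function.Injective G.mulVec) (δ : ℕ)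
    (hδ : IsGreatest {d : ℕ | ∃ r : Fin k → Fin n, StrictMono r ∧
        (G.submatrix r id).det ≠ 0 ∧ ((G.submatrix r id).det).natDegree = d} δ) :
    freeDist {v | ∃ u : Fin k → Polynomial F, v = G.mulVec u} ≤
      (n - k) * (δ / k + 1) + δ + 1 := by
  obtain ⟨V, hV, hred⟩ := G.exists_isUnit_det_isColReduced_mul hfull
  set e := (G * V).colDegree with he
  have hsum : ∑ i, e i ≤ δ := by
    obtain ⟨r, hr, hGr, hle⟩ := Matrix.exists_strictMono_sum_colDegree_mul_le hV hred
    exact hle.trans (hδ.2 ⟨r, hr, hGr, rfl⟩)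
  set ℓ := δ / k
  have hcount : k * (ℓ + 1) ≤ ∑ i, (ℓ + 1 - e i) + δ :=
    calc k * (ℓ + 1) = ∑ _i : Fin k, (ℓ + 1) := by simp
      _ ≤ ∑ i, ((ℓ + 1 - e i) + e i) := sum_le_sum fun i _ => by omega
      _ ≤ ∑ i, (ℓ + 1 - e i) + δ := by rw [sum_add_distrib]; omega
  have hδlt : δ < k * (ℓ + 1) := Nat.lt_mul_div_succ δ hk
  have hpos : 0 < ∑ i, (ℓ + 1 - e i) := by omega
  obtain ⟨u, hu, hweight⟩ := (G * V).exists_mulVec_ne_zero_polyVecWeight_add_le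
    (Matrix.mulVec_mul_injective hfull hV) ℓ hpos
  rw [← he] at hweight
  have hsplit : n * (ℓ + 1) = (n - k) * (ℓ + 1) + k * (ℓ + 1) := by
    rw [← add_mul, Nat.sub_add_cancel hkn.le]
  calc freeDist {v | ∃ u, v = G.mulVec u} ≤ polyVecWeight ((G * V).mulVec u) :=
        Nat.sInf_le ⟨_, ⟨V.mulVec u, (Matrix.mulVec_mulVec u G V).symm⟩, hu, rfl⟩
    _ ≤ (n - k) * (ℓ + 1) + δ + 1 := by omega

/-- The generalized Singleton bound: for a rate `k/n` convolutional code of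
complexity `δ`, the free distance is at most `(n-k)(⌊δ/k⌋+1) + δ + 1`. -/
theorem generalized_singleton_bound {F : Type*} [Field F] [Fintype F] {n k : ℕ}
    (hk : 0 < k) (hkn : k < n)
    (G : Matrix (Fin n) (Fin k) (Polynomial F))
    (hfull : Function.Injective G.mulVec) (δ : ℕ)
    (hδ : IsGreatest {d : ℕ | ∃ r : Fin k → Fin n, StrictMono r ∧
        (G.submatrix r id).det ≠ 0 ∧ ((G.submatrix r id).det).natDegree = d} δ) :
    freeDist {v | ∃ u : Fin k → Polynomial F, v = G.mulVec u} ≤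
      (n - k) * (δ / k + 1) + δ + 1 :=
  generalized_singleton_bound_general hk hkn G hfull δ hδ
end

section
/- Let F be a finite field, let k < n be positive integers, and let G be an n×k matrix over F[s] of full column rank k which is basic, i.e., the greatest common divisor of the determinants of the k×k submatrices of G is a nonzero constant. Let C = { G·u : u ∈ F[s]^k }. Then for every j ≥ 0, the j-th column distance satisfies d_j^c(C) ≤ (n−k)(j+1) + 1. -/
open Polynomial

/-- The Hamming weight of a vector over a field. -/
noncomputable def hammingWt {F : Type*} [Field F] {n : ℕ} (x : Fin n → F) : ℕ :=
  Nat.card {i : Fin n // x i ≠ 0}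

/-- The `j`-th column distance of a set of polynomial vectors (a convolutional
code): the minimal sum of the Hamming weights of the first `j+1` coefficient
vectors of a codeword whose zeroth coefficient vector is nonzero. -/
noncomputable def colDist {F : Type*} [Field F] {n : ℕ}
    (C : Set (Fin n → Polynomial F)) (j : ℕ) : ℕ :=
  sInf {w | ∃ v ∈ C, (fun i => (v i).coeff 0) ≠ (0 : Fin n → F) ∧
    (∑ t ∈ Finset.range (j + 1), hammingWt (fun i => (v i).coeff t)) = w}

/-- `G` is basic: the only common divisors of the determinants of its `k × k`
submatrices are the units, i.e. the nonzero constants. -/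
def IsBasic {F : Type*} [Field F] {n k : ℕ}
    (G : Matrix (Fin n) (Fin k) (Polynomial F)) : Prop :=
  ∀ d : Polynomial F,
    (∀ r : Fin k → Fin n, StrictMono r → d ∣ (G.submatrix r id).det) → IsUnit d

lemma hammingWt_le {F : Type*} [Field F] {n : ℕ} (x : Fin n → F) (s : Finset (Fin n))
    (h : ∀ i, x i ≠ 0 → i ∈ s) : hammingWt x ≤ s.card := by
  classical
  rw [hammingWt, Nat.card_eq_fintype_card, ← Fintype.card_coe s]
  exact Fintype.card_le_of_injective (fun p => ⟨p.1, h p.1 p.2⟩)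
    (fun a b hab => Subtype.ext (by simpa [Subtype.ext_iff] using hab))

/-- The bound on the column distances: `d_j^c(C) ≤ (n-k)(j+1) + 1`. -/
theorem colDist_bound {F : Type*} [Field F] [Fintype F] {n k : ℕ}
    (hk : 0 < k) (hkn : k < n)
    (G : Matrix (Fin n) (Fin k) (Polynomial F))
    (hfull : Function.Injective G.mulVec) (hbasic : IsBasic G) (j : ℕ) :
    colDist {v | ∃ u : Fin k → Polynomial F, v = G.mulVec u} j ≤
      (n - k) * (j + 1) + 1 := by
  classical
  have h1 : ∃ r : Fin k → Fin n, StrictMono r ∧ ((G.submatrix r id).det).coeff 0 ≠ 0 := by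
    by_contra h
    push_neg at h
    have := hbasic X (fun r hr => X_dvd_iff.mpr (h r hr))
    exact Polynomial.not_isUnit_X this
  obtain ⟨r, hr, hdet⟩ := h1
  set B := G.submatrix r id with hB
  set i0 : Fin k := ⟨0, hk⟩ with hi0
  have hX : ¬ (X : F[X]) ∣ B.det := fun h => hdet (X_dvd_iff.mp h)
  have hcop : IsCoprime ((X : F[X]) ^ (j+1)) B.det :=
    (Polynomial.irreducible_X.coprime_iff_not_dvd.mpr hX).pow_left
  obtain ⟨c, q, hcq⟩ := hcop
  set u : Fin k → F[X] := B.adjugate.mulVec (Pi.single i0 q) with hu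
  have hBu : B.mulVec u = Pi.single i0 (B.det * q) := by
    rw [hu, Matrix.mulVec_mulVec, Matrix.mul_adjugate, Matrix.smul_mulVec,
      Matrix.one_mulVec]
    ext i
    rcases eq_or_ne i i0 with h | h <;> simp [h, Pi.single_apply]
  set v := G.mulVec u with hv
  have hvr : ∀ i : Fin k, v (r i) = (B.mulVec u) i := by
    intro i
    simp [hv, hB, Matrix.mulVec, dotProduct, Matrix.submatrix_apply]
  have hcoeff : ∀ (t : ℕ), t ≤ j → ∀ i : Fin k,
      (v (r i)).coeff t = if t = 0 ∧ i = i0 then 1 else 0 := by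
    intro t ht i
    rw [hvr, hBu]
    rcases eq_or_ne i i0 with h | h
    · subst h
      have heq : B.det * q = 1 - c * X ^ (j+1) := by linear_combination hcq
      simp only [Pi.single_eq_same, heq, coeff_sub, coeff_mul_X_pow']
      have : ¬ (j + 1 ≤ t) := by omega
      rcases eq_or_ne t 0 with h0 | h0 <;> simp [h0, this, coeff_one]
    · simp [Pi.single_eq_of_ne h, h]
  -- weight bounds
  have himg : (Finset.univ.image r).card = k := by
    rw [Finset.card_image_of_injective _ hr.injective, Finset.card_univ, Fintype.card_fin]
  have hwt : ∀ t : ℕ, t ≤ j →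
      hammingWt (fun i => (v i).coeff t) ≤ (n - k) + (if t = 0 then 1 else 0) := by
    intro t ht
    rcases eq_or_ne t 0 with h0 | h0
    · subst h0
      have hle := hammingWt_le (fun i => (v i).coeff 0)
        ((Finset.univ \ Finset.univ.image r) ∪ {r i0}) ?_
      · refine hle.trans ?_
        refine (Finset.card_union_le _ _).trans ?_
        simp only [Finset.card_sdiff_of_subset (Finset.subset_univ _), Finset.card_univ,
          Fintype.card_fin, himg, Finset.card_singleton]
        simp
      · intro i hi
        by_cases hmem : i ∈ Finset.univ.image r
        · obtain ⟨i', _, rfl⟩ := Finset.mem_image.mp hmem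
          have hi' : (v (r i')).coeff 0 ≠ 0 := hi
          rw [hcoeff 0 (Nat.zero_le _) i'] at hi'
          have : i' = i0 := by
            by_contra hne
            simp [hne] at hi'
          subst this
          exact Finset.mem_union_right _ (Finset.mem_singleton_self _)
        · exact Finset.mem_union_left _ (Finset.mem_sdiff.mpr ⟨Finset.mem_univ _, hmem⟩)
    · have hle := hammingWt_le (fun i => (v i).coeff t)
        (Finset.univ \ Finset.univ.image r) ?_
      · refine hle.trans ?_
        simp only [Finset.card_sdiff_of_subset (Finset.subset_univ _), Finset.card_univ,
          Fintype.card_fin, himg, if_neg h0]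
        exact le_refl _
      · intro i hi
        by_cases hmem : i ∈ Finset.univ.image r
        · obtain ⟨i', _, rfl⟩ := Finset.mem_image.mp hmem
          have hi' : (v (r i')).coeff t ≠ 0 := hi
          rw [hcoeff t ht i'] at hi'
          simp [h0] at hi'
        · exact Finset.mem_sdiff.mpr ⟨Finset.mem_univ _, hmem⟩
  have hne : (fun i => (v i).coeff 0) ≠ (0 : Fin n → F) := by
    intro h
    have h1 := congrFun h (r i0)
    rw [hcoeff 0 (Nat.zero_le _) i0] at h1
    simp at h1
  have hsum : (∑ t ∈ Finset.range (j + 1), hammingWt (fun i => (v i).coeff t))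
      ≤ (n - k) * (j + 1) + 1 := by
    calc (∑ t ∈ Finset.range (j + 1), hammingWt (fun i => (v i).coeff t))
        ≤ ∑ t ∈ Finset.range (j + 1), ((n - k) + (if t = 0 then 1 else 0)) :=
          Finset.sum_le_sum (fun t ht => hwt t (Nat.lt_succ_iff.mp (Finset.mem_range.mp ht)))
      _ = (n - k) * (j + 1) + 1 := by
          rw [Finset.sum_add_distrib, Finset.sum_const, Finset.card_range]
          simp [Finset.sum_ite_eq', mul_comm]
  have hmem : (∑ t ∈ Finset.range (j + 1), hammingWt (fun i => (v i).coeff t)) ∈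
      {w | ∃ x ∈ {v | ∃ u : Fin k → Polynomial F, v = G.mulVec u},
        (fun i => (x i).coeff 0) ≠ (0 : Fin n → F) ∧
        (∑ t ∈ Finset.range (j + 1), hammingWt (fun i => (x i).coeff t)) = w} :=
    ⟨v, ⟨u, hv⟩, hne, rfl⟩
  exact le_trans (Nat.sInf_le hmem) hsum
end

section
/- Let F be a finite field, let k < n be positive integers, and let G be a basic n×k matrix over F[s] of full column rank k, generating the code C = { G·u : u ∈ F[s]^k }. If d_j^c(C) = (n−k)(j+1) + 1 for some j ≥ 0, then d_i^c(C) = (n−k)(i+1) + 1 for every i with 0 ≤ i ≤ j. -/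
open Polynomial

namespace ColDistAux

variable {F : Type*} [Field F] {n k : ℕ}

/-- The constant-coefficient `k × k` submatrix of `G` with rows selected by `r`. -/
def A0 (G : Matrix (Fin n) (Fin k) (Polynomial F)) (r : Fin k → Fin n) :
    Matrix (Fin k) (Fin k) F := Matrix.of fun a b => (G (r a) b).coeff 0

lemma mulVec_coeff (G : Matrix (Fin n) (Fin k) (Polynomial F)) (u : Fin k → Polynomial F)
    (x : Fin n) (t : ℕ) :
    (G.mulVec u x).coeff t =
      ∑ l, ∑ m ∈ Finset.range (t + 1), (G x l).coeff m * (u l).coeff (t - m) := by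
  simp [Matrix.mulVec, dotProduct, Polynomial.finset_sum_coeff, Polynomial.coeff_mul,
    Finset.Nat.sum_antidiagonal_eq_sum_range_succ_mk]

/-- Coefficients of a modified input sequence: they agree with `u` up to time `i`, and
afterwards they are chosen so that the output coordinates selected by `r` vanish. -/
noncomputable def cfun (G : Matrix (Fin n) (Fin k) (Polynomial F)) (r : Fin k → Fin n)
    (i : ℕ) (u : Fin k → Polynomial F) : ℕ → Fin k → F
  | t =>
    if _h : t ≤ i then fun l => (u l).coeff t
    else
      (A0 G r)⁻¹.mulVec fun a =>
        - ∑ m ∈ (Finset.range t).attach,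
            ∑ l, (G (r a) l).coeff (m.1 + 1) * cfun G r i u (t - 1 - m.1) l
  termination_by t => t
  decreasing_by
    have := Finset.mem_range.mp m.2
    omega

lemma cfun_of_le (G : Matrix (Fin n) (Fin k) (Polynomial F)) (r : Fin k → Fin n)
    {i : ℕ} (u : Fin k → Polynomial F) {t : ℕ} (h : t ≤ i) :
    cfun G r i u t = fun l => (u l).coeff t := by
  rw [cfun, dif_pos h]

lemma A0_mulVec_cfun (G : Matrix (Fin n) (Fin k) (Polynomial F)) (r : Fin k → Fin n)
    {i : ℕ} (u : Fin k → Polynomial F) (hA : IsUnit (A0 G r).det) {t : ℕ} (h : i < t) :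
    (A0 G r).mulVec (cfun G r i u t) = fun a =>
      - ∑ m ∈ Finset.range t, ∑ l, (G (r a) l).coeff (m + 1) * cfun G r i u (t - 1 - m) l := by
  conv_lhs => rw [cfun, dif_neg (by omega)]
  rw [Matrix.mulVec_mulVec, Matrix.mul_nonsing_inv _ hA, Matrix.one_mulVec]
  funext a
  rw [neg_inj]
  exact Finset.sum_attach (Finset.range t) fun m =>
    ∑ l, (G (r a) l).coeff (m + 1) * cfun G r i u (t - 1 - m) l

/-- The modified input (a polynomial vector of degree at most `N`). -/
noncomputable def wvec (G : Matrix (Fin n) (Fin k) (Polynomial F)) (r : Fin k → Fin n)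
    (i N : ℕ) (u : Fin k → Polynomial F) : Fin k → Polynomial F :=
  fun l => ∑ t ∈ Finset.range (N + 1), Polynomial.C (cfun G r i u t l) * X ^ t

lemma wvec_coeff (G : Matrix (Fin n) (Fin k) (Polynomial F)) (r : Fin k → Fin n)
    (i N : ℕ) (u : Fin k → Polynomial F) {t : ℕ} (h : t ≤ N) (l : Fin k) :
    (wvec G r i N u l).coeff t = cfun G r i u t l := by
  simp only [wvec, Polynomial.finset_sum_coeff, Polynomial.coeff_C_mul, Polynomial.coeff_X_pow,
    mul_ite, mul_one, mul_zero]
  rw [Finset.sum_ite_eq (Finset.range (N + 1)) t (fun s => cfun G r i u s l),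
    if_pos (Finset.mem_range.mpr (by omega))]

lemma key_low (G : Matrix (Fin n) (Fin k) (Polynomial F)) (r : Fin k → Fin n)
    (i N : ℕ) (hiN : i ≤ N) (u : Fin k → Polynomial F) {t : ℕ} (ht : t ≤ i) (x : Fin n) :
    ((G.mulVec (wvec G r i N u)) x).coeff t = ((G.mulVec u) x).coeff t := by
  rw [mulVec_coeff, mulVec_coeff]
  refine Finset.sum_congr rfl fun l _ => Finset.sum_congr rfl fun m hm => ?_
  rw [wvec_coeff G r i N u (by omega), cfun_of_le G r u (by omega)]

lemma key_zero (G : Matrix (Fin n) (Fin k) (Polynomial F)) (r : Fin k → Fin n)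
    (hA : IsUnit (A0 G r).det)
    (i N : ℕ) (u : Fin k → Polynomial F) {t : ℕ} (hit : i < t) (htN : t ≤ N) (a : Fin k) :
    ((G.mulVec (wvec G r i N u)) (r a)).coeff t = 0 := by
  rw [mulVec_coeff]
  have hcoe : ∀ l, ∀ m ∈ Finset.range (t + 1),
      (G (r a) l).coeff m * (wvec G r i N u l).coeff (t - m)
        = (G (r a) l).coeff m * cfun G r i u (t - m) l := by
    intro l m hm
    rw [wvec_coeff G r i N u (by omega)]
  calc ∑ l, ∑ m ∈ Finset.range (t + 1), (G (r a) l).coeff m * (wvec G r i N u l).coeff (t - m)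
      = ∑ l, ∑ m ∈ Finset.range (t + 1), (G (r a) l).coeff m * cfun G r i u (t - m) l := by
        exact Finset.sum_congr rfl fun l _ => Finset.sum_congr rfl (hcoe l)
    _ = ∑ l, ((∑ m ∈ Finset.range t, (G (r a) l).coeff (m + 1) * cfun G r i u (t - 1 - m) l)
          + (G (r a) l).coeff 0 * cfun G r i u t l) := by
        refine Finset.sum_congr rfl fun l _ => ?_
        rw [Finset.sum_range_succ']
        congr 1
        refine Finset.sum_congr rfl fun m _ => ?_
        congr 2
        omega
    _ = (∑ l, ∑ m ∈ Finset.range t, (G (r a) l).coeff (m + 1) * cfun G r i u (t - 1 - m) l)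
          + ∑ l, (A0 G r) a l * cfun G r i u t l := by
        rw [Finset.sum_add_distrib]
        rfl
    _ = 0 := by
        have h2 : ∑ l, (A0 G r) a l * cfun G r i u t l
            = (A0 G r).mulVec (cfun G r i u t) a := rfl
        have h3 : (∑ l, ∑ m ∈ Finset.range t,
              (G (r a) l).coeff (m + 1) * cfun G r i u (t - 1 - m) l)
            = ∑ m ∈ Finset.range t, ∑ l,
              (G (r a) l).coeff (m + 1) * cfun G r i u (t - 1 - m) l :=
          Finset.sum_comm
        rw [h2, A0_mulVec_cfun G r u hA hit, h3]
        exact add_neg_cancel _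

lemma hammingWt_le_of_zero_on (x : Fin n → F) (S : Finset (Fin n)) (h : ∀ i ∈ S, x i = 0) :
    hammingWt x ≤ n - S.card := by
  classical
  rw [hammingWt, Nat.card_eq_fintype_card, Fintype.card_subtype]
  have hsub : Finset.univ.filter (fun i => x i ≠ 0) ⊆ Finset.univ \ S := by
    intro i hi
    simp only [Finset.mem_filter, Finset.mem_univ, true_and] at hi
    simp only [Finset.mem_sdiff, Finset.mem_univ, true_and]
    intro hiS; exact hi (h i hiS)
  calc (Finset.univ.filter (fun i => x i ≠ 0)).card ≤ (Finset.univ \ S).card :=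
        Finset.card_le_card hsub
    _ = n - S.card := by
        rw [Finset.card_sdiff_of_subset (Finset.subset_univ S), Finset.card_univ, Fintype.card_fin]

lemma exists_r (G : Matrix (Fin n) (Fin k) (Polynomial F))
    (hbasic : IsBasic G) :
    ∃ r : Fin k → Fin n, StrictMono r ∧ IsUnit (A0 G r).det := by
  by_contra hcon
  push_neg at hcon
  have hX : IsUnit (X : Polynomial F) := by
    apply hbasic
    intro r hr
    rw [Polynomial.X_dvd_iff]
    have h1 : (A0 G r).det = 0 := by
      by_contra h2
      exact hcon r hr (isUnit_iff_ne_zero.mpr h2)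
    have h3 : (G.submatrix r id).det.coeff 0 = (A0 G r).det := by
      rw [Polynomial.coeff_zero_eq_eval_zero]
      have := RingHom.map_det (Polynomial.evalRingHom (0 : F)) (G.submatrix r id)
      rw [show ((Polynomial.evalRingHom (0 : F)) (G.submatrix r id).det
          = (G.submatrix r id).det.eval 0) from rfl] at this
      rw [this]
      congr 1
      ext a b
      simp [A0, Matrix.submatrix, Polynomial.coeff_zero_eq_eval_zero]
    rw [h3, h1]
  exact Polynomial.not_isUnit_X hX

end ColDistAux

/-- If the `j`-th column distance attains its maximal value `(n-k)(j+1)+1`,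
then so do all earlier column distances. -/
theorem colDist_max_of_earlier {F : Type*} [Field F] [Fintype F] {n k : ℕ}
    (hk : 0 < k) (hkn : k < n)
    (G : Matrix (Fin n) (Fin k) (Polynomial F))
    (hfull : Function.Injective G.mulVec) (hbasic : IsBasic G) (j : ℕ)
    (hj : colDist {v | ∃ u : Fin k → Polynomial F, v = G.mulVec u} j =
      (n - k) * (j + 1) + 1)
    (i : ℕ) (hij : i ≤ j) :
    colDist {v | ∃ u : Fin k → Polynomial F, v = G.mulVec u} i =
      (n - k) * (i + 1) + 1 := by
  classical
  obtain ⟨r, hrmono, hA⟩ := ColDistAux.exists_r G hbasic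
  have hrinj := hrmono.injective
  set C : Set (Fin n → Polynomial F) := {v | ∃ u : Fin k → Polynomial F, v = G.mulVec u}
    with hC
  set D := n - k with hD
  -- ### Upper bound: construct a codeword of truncated weight ≤ D*(i+1)+1.
  set a0 : Fin k := ⟨0, hk⟩ with ha0
  set c0 : Fin k → F := (ColDistAux.A0 G r)⁻¹.mulVec (Pi.single a0 1) with hc0
  set u0 : Fin k → Polynomial F := fun l => Polynomial.C (c0 l) with hu0
  set w0 : Fin k → Polynomial F := ColDistAux.wvec G r 0 i u0 with hw0
  have hA0c0 : (ColDistAux.A0 G r).mulVec c0 = Pi.single a0 1 := by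
    rw [hc0, Matrix.mulVec_mulVec, Matrix.mul_nonsing_inv _ hA, Matrix.one_mulVec]
  have hu0c : ∀ a, ((G.mulVec u0) (r a)).coeff 0 = (Pi.single a0 1 : Fin k → F) a := by
    intro a
    rw [ColDistAux.mulVec_coeff, ← hA0c0]
    simp [Matrix.mulVec, dotProduct, ColDistAux.A0, hu0]
  have hw0c : ∀ a, ((G.mulVec w0) (r a)).coeff 0 = (Pi.single a0 1 : Fin k → F) a := by
    intro a
    rw [hw0, ColDistAux.key_low G r 0 i (Nat.zero_le _) u0 le_rfl]
    exact hu0c a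
  have hnz0 : (fun x => ((G.mulVec w0) x).coeff 0) ≠ (0 : Fin n → F) := by
    intro hcontra
    have h1 : ((G.mulVec w0) (r a0)).coeff 0 = 0 := congrFun hcontra (r a0)
    rw [hw0c a0, Pi.single_eq_same] at h1
    exact one_ne_zero h1
  -- weight of coefficient 0
  have hb0 : hammingWt (fun x => ((G.mulVec w0) x).coeff 0) ≤ n - (k - 1) := by
    have hcard : (Finset.image r (Finset.univ.erase a0)).card = k - 1 := by
      rw [Finset.card_image_of_injective _ hrinj, Finset.card_erase_of_mem (Finset.mem_univ _),
        Finset.card_univ, Fintype.card_fin]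
    rw [← hcard]
    apply ColDistAux.hammingWt_le_of_zero_on
    intro x hx
    obtain ⟨a, ha, rfl⟩ := Finset.mem_image.mp hx
    rw [hw0c a]
    exact Pi.single_eq_of_ne (Finset.ne_of_mem_erase ha) 1
  -- weight of later coefficients
  have hbt : ∀ t, 0 < t → t ≤ i → hammingWt (fun x => ((G.mulVec w0) x).coeff t) ≤ D := by
    intro t ht hti
    have hcard : (Finset.image r Finset.univ).card = k := by
      rw [Finset.card_image_of_injective _ hrinj, Finset.card_univ, Fintype.card_fin]
    have : hammingWt (fun x => ((G.mulVec w0) x).coeff t)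
        ≤ n - (Finset.image r Finset.univ).card := by
      apply ColDistAux.hammingWt_le_of_zero_on
      intro x hx
      obtain ⟨a, _, rfl⟩ := Finset.mem_image.mp hx
      exact ColDistAux.key_zero G r hA 0 i u0 ht hti a
    rwa [hcard] at this
  have hW0 : (∑ t ∈ Finset.range (i + 1), hammingWt (fun x => ((G.mulVec w0) x).coeff t))
      ≤ D * (i + 1) + 1 := by
    rw [Finset.sum_range_succ']
    have h5 : (∑ t ∈ Finset.range i, hammingWt (fun x => ((G.mulVec w0) x).coeff (t + 1)))
        ≤ i * D := by
      calc _ ≤ (Finset.range i).card • D :=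
            Finset.sum_le_card_nsmul _ _ _ (fun t ht =>
              hbt (t + 1) (Nat.succ_pos t) (Nat.succ_le_of_lt (Finset.mem_range.mp ht)))
        _ = i * D := by rw [Finset.card_range, smul_eq_mul]
    have h6 : n - (k - 1) = D + 1 := by omega
    have h7 : D * (i + 1) + 1 = i * D + (D + 1) := by
      rw [Nat.mul_succ, mul_comm D i, Nat.add_assoc]
    rw [h7]
    exact Nat.add_le_add h5 (h6 ▸ hb0)
  have hmem0 : (∑ t ∈ Finset.range (i + 1), hammingWt (fun x => ((G.mulVec w0) x).coeff t))
      ∈ {w | ∃ v ∈ C, (fun x => (v x).coeff 0) ≠ (0 : Fin n → F) ∧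
          (∑ t ∈ Finset.range (i + 1), hammingWt (fun x => (v x).coeff t)) = w} :=
    ⟨G.mulVec w0, ⟨w0, rfl⟩, hnz0, rfl⟩
  have hupper : colDist C i ≤ D * (i + 1) + 1 :=
    le_trans (Nat.sInf_le hmem0) hW0
  -- ### Lower bound
  have hne : {w | ∃ v ∈ C, (fun x => (v x).coeff 0) ≠ (0 : Fin n → F) ∧
      (∑ t ∈ Finset.range (i + 1), hammingWt (fun x => (v x).coeff t)) = w}.Nonempty :=
    ⟨_, hmem0⟩
  obtain ⟨v, hvC, hvnz, hvsum⟩ : ∃ v ∈ C, (fun x => (v x).coeff 0) ≠ (0 : Fin n → F) ∧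
      (∑ t ∈ Finset.range (i + 1), hammingWt (fun x => (v x).coeff t)) = colDist C i :=
    Nat.sInf_mem hne
  obtain ⟨u, hvu⟩ := hvC
  rw [hvu] at hvnz hvsum
  clear hvu
  set w1 : Fin k → Polynomial F := ColDistAux.wvec G r i j u with hw1
  have hlow1 : ∀ t ≤ i, ∀ x, ((G.mulVec w1) x).coeff t = ((G.mulVec u) x).coeff t :=
    fun t ht x => ColDistAux.key_low G r i j hij u ht x
  have hnz1 : (fun x => ((G.mulVec w1) x).coeff 0) ≠ (0 : Fin n → F) := by
    have : (fun x => ((G.mulVec w1) x).coeff 0) = (fun x => ((G.mulVec u) x).coeff 0) :=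
      funext fun x => hlow1 0 (Nat.zero_le _) x
    rwa [this]
  have hsum1 : (∑ t ∈ Finset.range (j + 1), hammingWt (fun x => ((G.mulVec w1) x).coeff t))
      ≤ colDist C i + (j - i) * D := by
    have hsplit : (∑ t ∈ Finset.range (j + 1), hammingWt (fun x => ((G.mulVec w1) x).coeff t))
        = (∑ t ∈ Finset.range (i + 1), hammingWt (fun x => ((G.mulVec w1) x).coeff t))
          + ∑ t ∈ Finset.Ico (i + 1) (j + 1), hammingWt (fun x => ((G.mulVec w1) x).coeff t) := by
      have hcons := Finset.sum_Ico_consecutive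
        (fun t => hammingWt (fun x => ((G.mulVec w1) x).coeff t))
        (Nat.zero_le (i + 1)) (show i + 1 ≤ j + 1 by omega)
      simp only [Finset.range_eq_Ico]
      exact hcons.symm
    have hpart1 : (∑ t ∈ Finset.range (i + 1), hammingWt (fun x => ((G.mulVec w1) x).coeff t))
        = colDist C i := by
      have hcongr : (∑ t ∈ Finset.range (i + 1),
            hammingWt (fun x => ((G.mulVec w1) x).coeff t))
          = ∑ t ∈ Finset.range (i + 1), hammingWt (fun x => ((G.mulVec u) x).coeff t) := by
        refine Finset.sum_congr rfl fun t ht => ?_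
        congr 1
        refine funext fun x => hlow1 t ?_ x
        have := Finset.mem_range.mp ht
        omega
      exact hcongr.trans hvsum
    have hpart2 : (∑ t ∈ Finset.Ico (i + 1) (j + 1),
        hammingWt (fun x => ((G.mulVec w1) x).coeff t)) ≤ (j - i) * D := by
      calc _ ≤ (Finset.Ico (i + 1) (j + 1)).card • D := by
            apply Finset.sum_le_card_nsmul
            intro t ht
            obtain ⟨ht1, ht2⟩ := Finset.mem_Ico.mp ht
            have hcard : (Finset.image r Finset.univ).card = k := by
              rw [Finset.card_image_of_injective _ hrinj, Finset.card_univ, Fintype.card_fin]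
            have : hammingWt (fun x => ((G.mulVec w1) x).coeff t)
                ≤ n - (Finset.image r Finset.univ).card := by
              apply ColDistAux.hammingWt_le_of_zero_on
              intro x hx
              obtain ⟨a, _, rfl⟩ := Finset.mem_image.mp hx
              exact ColDistAux.key_zero G r hA i j u (by omega) (by omega) a
            rwa [hcard] at this
        _ = (j - i) * D := by rw [Nat.card_Ico, smul_eq_mul]; congr 1; omega
    rw [hsplit, hpart1]
    exact Nat.add_le_add_left hpart2 _
  have hmem1 : (∑ t ∈ Finset.range (j + 1), hammingWt (fun x => ((G.mulVec w1) x).coeff t))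
      ∈ {w | ∃ v ∈ C, (fun x => (v x).coeff 0) ≠ (0 : Fin n → F) ∧
          (∑ t ∈ Finset.range (j + 1), hammingWt (fun x => (v x).coeff t)) = w} :=
    ⟨G.mulVec w1, ⟨w1, rfl⟩, hnz1, rfl⟩
  have hdj : colDist C j ≤ colDist C i + (j - i) * D :=
    le_trans (Nat.sInf_le hmem1) hsum1
  rw [hj] at hdj
  have hmul : D * (j + 1) = D * (i + 1) + D * (j - i) := by
    rw [← Nat.mul_add]
    congr 1
    omega
  have hcm : (j - i) * D = D * (j - i) := mul_comm _ _
  rw [hmul, hcm] at hdj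
  have hlower : D * (i + 1) + 1 ≤ colDist C i := by
    have h8 : D * (i + 1) + D * (j - i) + 1 ≤ colDist C i + D * (j - i) := by omega
    omega
  exact le_antisymm hupper hlower
end

section
/- Let F be a finite field and let T be a (j+1)×(j+1) lower triangular Toeplitz matrix over F. Then T is superregular if and only if the (j+1)×(2j+2) matrix [I_{j+1} | T] obtained by placing the identity matrix to the left of T has the following maximum span property: the first column of T, viewed as a column of [I_{j+1} | T], is not contained in the linear span of any other j columns of [I_{j+1} | T]. -/
/-!
Discarding the rows hit by the chosen identity columns, `T₀` lies in the span of `j` columns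
of `[I | T]` iff, on the remaining row set `R`, the restricted column `T₀|_R` lies in the span
of restricted columns `T_c|_R` with `c ∈ J`, `0 ∉ J` and `#J < #R`.

If `T` is superregular, shrink `J` to a set `B` on which the restricted columns are independent
and span the same space. Since `T` is lower triangular, independence forces every `c` to have at
least as many rows of `R` as columns of `B` at or beyond `c`; this Hall-type count lets the top
`#B + 1` rows of `R` be matched properly with `{0} ∪ B`, and the nonzero proper minor makes
`T₀|_R` independent of `B`.

Conversely, take a smallest singular proper minor. Toeplitz shifts let it start at column `0`,
and minimality makes the first entry of a kernel vector nonzero, so on the rows of the minor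
`T₀` is a combination of the minor's other `s - 1` columns; adding the `j + 1 - s` unit
vectors of the remaining rows gives `j` columns of `[I | T]` spanning `T₀`.
-/

/-- A square matrix is a lower triangular Toeplitz matrix if its entries below
and on the diagonal depend only on the difference of the indices, determined by
the first column, and the entries above the diagonal vanish. -/
def IsLTToeplitz {F : Type*} [CommRing F] {m : ℕ}
    (A : Matrix (Fin m) (Fin m) F) : Prop :=
  ∃ a : ℕ → F, ∀ r c : Fin m,
    A r c = if (c : ℕ) ≤ (r : ℕ) then a ((r : ℕ) - (c : ℕ)) else 0

/-- A square matrix is superregular if it is a lower triangular Toeplitz matrix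
and every proper submatrix (rows `i₁ < … < iₛ`, columns `j₁ < … < jₛ` with
`jᵥ ≤ iᵥ` for all `ν`) has a nonzero determinant. -/
def Superregular {F : Type*} [CommRing F] {m : ℕ}
    (A : Matrix (Fin m) (Fin m) F) : Prop :=
  IsLTToeplitz A ∧
  ∀ (s : ℕ) (i j : Fin s → Fin m), StrictMono i → StrictMono j →
    (∀ ν : Fin s, (j ν : ℕ) ≤ (i ν : ℕ)) → (A.submatrix i j).det ≠ 0

open Finset Submodule

theorem mem_span_fromCols_one_iff {F m n : Type*} [Ring F] [Fintype m] [DecidableEq m]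
    (M : Matrix m n F) (S : Finset (m ⊕ n)) (v : m → F) :
    v ∈ span F ((fun c r => Matrix.fromCols (1 : Matrix m m F) M r c) '' ↑S) ↔
      (fun r : ↥(S.toLeftᶜ) => v r) ∈
        span F ((fun c (r : ↥(S.toLeftᶜ)) => M r c) '' ↑S.toRight) := by
  set ρ := LinearMap.funLeft F F (Subtype.val : ↥(S.toLeftᶜ) → m)
  have hker : span F ((fun k r => (1 : Matrix m m F) r k) '' S.toLeft) = LinearMap.ker ρ := by
    apply le_antisymm
    · rw [span_le]
      rintro _ ⟨k, hk, rfl⟩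
      ext ⟨r, hr⟩
      have : r ≠ k := by rintro rfl; simp_all
      simp [ρ, LinearMap.funLeft_apply, Matrix.one_apply, this]
    · intro w hw
      have hw' : ∀ r ∉ S.toLeft, w r = 0 := fun r hr => congrFun hw ⟨r, mem_compl.2 hr⟩
      have : w = ∑ k ∈ S.toLeft, w k • fun r => (1 : Matrix m m F) r k := by
        ext r
        by_cases hr : r ∈ S.toLeft <;> simp [Matrix.one_apply, hr, hw']
      rw [this]
      exact sum_mem fun k hk => smul_mem _ _ (subset_span ⟨k, hk, rfl⟩)
  have himage : (fun c r => Matrix.fromCols (1 : Matrix m m F) M r c) '' (S : Set (m ⊕ n)) =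
      (fun k r => (1 : Matrix m m F) r k) '' S.toLeft ∪ (fun c r => M r c) '' S.toRight := by
    conv_lhs => rw [← toLeft_disjSum_toRight (u := S)]
    ext w
    simp [mem_disjSum]
  rw [himage, span_union, hker, sup_comm, ← comap_map_eq, mem_comap, map_span, ← Set.image_comp]
  rfl

theorem Finset.card_filter_eq_card_filter_orderEmbOfFin {ι : Type*} [LinearOrder ι]
    (s : Finset ι) (p : ι → Prop) [DecidablePred p] :
    #{y ∈ s | p y} = #{a : Fin #s | p (s.orderEmbOfFin rfl a)} := by
  conv_lhs => rw [← map_orderEmbOfFin_univ s rfl, filter_map, card_map]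
  rfl

theorem Finset.orderEmbOfFin_le_orderEmbOfFin_of_card_filter_le {ι : Type*} [LinearOrder ι]
    {R J : Finset ι} (hJR : #J ≤ #R)
    (hcount : ∀ c ∈ J, #{c' ∈ J | c ≤ c'} ≤ #{r ∈ R | c ≤ r}) (ν : Fin #J) :
    J.orderEmbOfFin rfl ν ≤ R.orderEmbOfFin rfl ⟨#R - #J + ν, by omega⟩ := by
  by_contra! hlt
  have hle := hcount _ (J.orderEmbOfFin_mem rfl ν)
  rw [card_filter_eq_card_filter_orderEmbOfFin J,
    card_filter_eq_card_filter_orderEmbOfFin R] at hle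
  simp only [OrderEmbedding.le_iff_le, filter_le_eq_Ici, Fin.card_Ici] at hle
  have hsub : ({a | J.orderEmbOfFin rfl ν ≤ R.orderEmbOfFin rfl a} : Finset (Fin #R)) ⊆
      Ioi ⟨#R - #J + ν, by omega⟩ := fun a ha => by
    rw [mem_filter] at ha
    exact mem_Ioi.2 ((R.orderEmbOfFin rfl).lt_iff_lt.1 (hlt.trans_le ha.2))
  have hcard := (card_le_card hsub).trans_eq (Fin.card_Ioi _)
  dsimp only at hcard
  omega

theorem card_filter_le_of_linearIndepOn {F ι : Type*} [DivisionRing F] [LinearOrder ι]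
    {A : Matrix ι ι F} (hA : ∀ r c, r < c → A r c = 0) {R J : Finset ι}
    (hJ : LinearIndepOn F (fun c (r : R) => A r c) J) (c : ι) :
    #{c' ∈ J | c ≤ c'} ≤ #{r ∈ R | c ≤ r} := by
  -- the columns `c' ≥ c` vanish on the rows `r < c`, so they stay independent on the rows `≥ c`
  have hind : LinearIndepOn F (fun c' (r : ↥{r ∈ R | c ≤ r}) => A r c') ↑{c' ∈ J | c ≤ c'} := by
    rw [linearIndepOn_finset_iff] at hJ ⊢
    intro g hg c' hc'
    rw [mem_filter] at hc'
    have key := hJ (fun x => if c ≤ x then g x else 0) ?_ c' hc'.1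
    · simpa [hc'.2] using key
    ext ⟨r, hr⟩
    simp only [Finset.sum_apply, Pi.smul_apply, smul_eq_mul, ite_mul, zero_mul, Pi.zero_apply]
    by_cases hcr : c ≤ r
    · simpa [sum_filter] using congrFun hg ⟨r, mem_filter.2 ⟨hr, hcr⟩⟩
    · refine sum_eq_zero fun x _ => ?_
      split_ifs with hcx
      · rw [hA r x (by order), mul_zero]
      · rfl
  simpa [Module.finrank_fintype_fun_eq_card] using hind.fintype_card_le_finrank

open Matrix in
theorem Matrix.det_submatrix_succ_succ_eq_zero {A : Type*} [CommRing A] [IsDomain A] {n : ℕ}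
    {M : Matrix (Fin (n + 1)) (Fin (n + 1)) A} {x : Fin (n + 1) → A} (hx : x ≠ 0)
    (hx0 : x 0 = 0) (hMx : M *ᵥ x = 0) : (M.submatrix Fin.succ Fin.succ).det = 0 := by
  refine exists_mulVec_eq_zero_iff.1
    ⟨Fin.tail x, fun htail => hx (funext fun k => Fin.cases hx0 (congrFun htail) k), ?_⟩
  ext ν
  simpa [mulVec, dotProduct, Fin.sum_univ_succ, hx0, Fin.tail] using congrFun hMx ν.succ

theorem IsLTToeplitz.apply_eq_zero_of_lt {F : Type*} [CommRing F] {m : ℕ}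
    {A : Matrix (Fin m) (Fin m) F} (hA : IsLTToeplitz A) {r c : Fin m} (hrc : r < c) :
    A r c = 0 := by
  obtain ⟨a, ha⟩ := hA
  rw [ha, if_neg (Fin.lt_def.1 hrc).not_ge]

theorem IsLTToeplitz.apply_sub {F : Type*} [CommRing F] {m : ℕ}
    {A : Matrix (Fin m) (Fin m) F} (hA : IsLTToeplitz A) {r c : Fin m} {d : ℕ}
    (hdr : d ≤ r) (hdc : d ≤ c) : A ⟨r - d, by omega⟩ ⟨c - d, by omega⟩ = A r c := by
  obtain ⟨a, ha⟩ := hA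
  rw [ha, ha]
  simp only [Nat.sub_le_sub_iff_right hdr, Nat.sub_sub_sub_cancel_right hdc]

theorem IsLTToeplitz.exists_submatrix_eq_of_col_zero {F : Type*} [CommRing F] {m s : ℕ}
    [NeZero m] {A : Matrix (Fin m) (Fin m) F} (hA : IsLTToeplitz A)
    {i jc : Fin (s + 1) → Fin m} (hi : StrictMono i) (hjc : StrictMono jc)
    (hp : ∀ ν, jc ν ≤ i ν) :
    ∃ i' jc' : Fin (s + 1) → Fin m, StrictMono i' ∧ StrictMono jc' ∧ (∀ ν, jc' ν ≤ i' ν) ∧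
      jc' 0 = 0 ∧ A.submatrix i' jc' = A.submatrix i jc := by
  have hjc0 : ∀ ν, jc 0 ≤ jc ν := fun ν => hjc.monotone (Fin.zero_le ν)
  have hi0 : ∀ ν, (jc 0 : ℕ) ≤ i ν := fun ν => (hjc0 ν).trans (hp ν)
  refine ⟨fun ν => ⟨i ν - jc 0, by omega⟩, fun ν => ⟨jc ν - jc 0, by omega⟩,
    fun a b hab => ?_, fun a b hab => ?_, fun ν => ?_, by ext; simp, ?_⟩
  · exact Fin.mk_lt_mk.2 (by have := Fin.lt_def.1 (hi hab); have := hi0 a; omega)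
  · exact Fin.mk_lt_mk.2 (by have := Fin.lt_def.1 (hjc hab); have := hjc0 a; omega)
  · exact Fin.mk_le_mk.2 (by have := Fin.le_def.1 (hp ν); omega)
  · ext ν μ
    exact hA.apply_sub (hi0 ν) (hjc0 μ)

theorem Superregular.linearIndepOn_of_card_filter_le {F : Type*} [CommRing F] [IsDomain F] {m : ℕ}
    {T : Matrix (Fin m) (Fin m) F} (hT : Superregular T) {R J : Finset (Fin m)}
    (hJR : #J ≤ #R) (hcount : ∀ c ∈ J, #{c' ∈ J | c ≤ c'} ≤ #{r ∈ R | c ≤ r}) :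
    LinearIndepOn F (fun c (r : R) => T r c) J := by
  set i : Fin #J → Fin m := fun ν => R.orderEmbOfFin rfl ⟨#R - #J + ν, by omega⟩
  have hi : StrictMono i := fun a b hab =>
    (R.orderEmbOfFin rfl).strictMono (Fin.mk_lt_mk.2 (by have := Fin.lt_def.1 hab; omega))
  have hdet := hT.2 #J i (J.orderEmbOfFin rfl) hi (J.orderEmbOfFin rfl).strictMono
    (orderEmbOfFin_le_orderEmbOfFin_of_card_filter_le hJR hcount)
  let restrict : (R → F) →ₗ[F] (Fin #J → F) :=
    LinearMap.funLeft F F fun ν => ⟨i ν, R.orderEmbOfFin_mem rfl _⟩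
  rw [← J.range_orderEmbOfFin rfl, linearIndepOn_range_iff (J.orderEmbOfFin rfl).injective]
  exact (Matrix.linearIndependent_cols_of_det_ne_zero hdet).of_comp restrict

theorem Superregular.col_zero_notMem_span {F : Type*} [Field F] {m : ℕ}
    {T : Matrix (Fin (m + 1)) (Fin (m + 1)) F} (hT : Superregular T)
    {R J : Finset (Fin (m + 1))} (h0 : 0 ∉ J) (hJR : #J < #R) :
    (fun r : R => T r 0) ∉ span F ((fun c (r : R) => T r c) '' J) := by
  classical
  intro hmem
  obtain ⟨B, hBJ, -, hspan, hB⟩ := exists_linearIndepOn_extension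
    (linearIndepOn_empty F fun c (r : R) => T r c) (Set.empty_subset (J : Set (Fin (m + 1))))
  have hBcard : #B.toFinset ≤ #J := card_le_card (Set.toFinset_subset.2 hBJ)
  have hind : LinearIndepOn F (fun c (r : R) => T r c) (insert 0 B) := by
    rw [← Set.coe_toFinset B, ← coe_insert]
    refine hT.linearIndepOn_of_card_filter_le ((card_insert_le _ _).trans (by omega))
      fun c _ => ?_
    rcases eq_or_ne c 0 with rfl | hc
    · simp only [Fin.zero_le, filter_true_of_mem, implies_true]
      exact (card_insert_le _ _).trans (by omega)
    · rw [filter_insert, if_neg (by simpa [Fin.le_zero_iff] using hc)]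
      exact card_filter_le_of_linearIndepOn (fun r c => hT.1.apply_eq_zero_of_lt)
        (by rwa [Set.coe_toFinset]) c
  exact ((linearIndepOn_insert fun h => h0 (hBJ h)).1 hind).2 (span_le.2 hspan hmem)


def HasMaxSpan {F : Type*} [Field F] {j : ℕ} (T : Matrix (Fin (j + 1)) (Fin (j + 1)) F) :
    Prop :=
  ∀ S : Finset (Fin (j + 1) ⊕ Fin (j + 1)), #S = j → Sum.inr 0 ∉ S →
    (fun r => Matrix.fromCols (1 : Matrix (Fin (j + 1)) (Fin (j + 1)) F) T r (Sum.inr 0)) ∉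
      span F ((fun c r => Matrix.fromCols (1 : Matrix (Fin (j + 1)) (Fin (j + 1)) F) T r c) '' ↑S)

theorem Superregular.hasMaxSpan {F : Type*} [Field F] {j : ℕ}
    {T : Matrix (Fin (j + 1)) (Fin (j + 1)) F} (hT : Superregular T) : HasMaxSpan T := by
  intro S hS h0 hmem
  rw [mem_span_fromCols_one_iff] at hmem
  refine hT.col_zero_notMem_span (R := S.toLeftᶜ) (J := S.toRight) (by simpa using h0) ?_
    (by simpa using hmem)
  have := card_toLeft_add_card_toRight (u := S)
  rw [card_compl, Fintype.card_fin]
  omega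

open Matrix in
theorem not_hasMaxSpan_of_mulVec_eq_zero {F : Type*} [Field F] {j n : ℕ}
    {T : Matrix (Fin (j + 1)) (Fin (j + 1)) F} {i jc : Fin (n + 1) → Fin (j + 1)}
    (hi : Function.Injective i) (hjc : Function.Injective jc) (hjc0 : jc 0 = 0)
    {x : Fin (n + 1) → F} (hx0 : x 0 ≠ 0) (hTx : T.submatrix i jc *ᵥ x = 0) :
    ¬ HasMaxSpan T := by
  classical
  have hrow : ∀ ν, T (i ν) 0 = ∑ μ : Fin n, (-(x 0)⁻¹ * x μ.succ) * T (i ν) (jc μ.succ) := by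
    intro ν
    have := congrFun hTx ν
    simp only [mulVec, dotProduct, submatrix_apply, Fin.sum_univ_succ, hjc0, Pi.zero_apply,
      mul_comm (T (i ν) _) (x _)] at this
    simp only [mul_assoc, ← mul_sum]
    field_simp
    linear_combination this
  have hcard : n + 1 ≤ j + 1 := by simpa using Fintype.card_le_of_injective i hi
  intro hmax
  refine hmax ((univ.image i)ᶜ.disjSum (univ.image (jc ∘ Fin.succ))) ?_ ?_ ?_
  · rw [card_disjSum, card_compl, card_image_of_injective _ hi,
      card_image_of_injective _ (hjc.comp (Fin.succ_injective n))]
    simp only [card_univ, Fintype.card_fin]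
    omega
  · simp only [inr_mem_disjSum, mem_image, mem_univ, true_and, Function.comp_apply, not_exists]
    intro μ h
    exact Fin.succ_ne_zero μ (hjc (h.trans hjc0.symm))
  · rw [mem_span_fromCols_one_iff, toLeft_disjSum, toRight_disjSum, compl_compl]
    simp only [Matrix.fromCols_apply_inr]
    have hsum : (fun r : ↥(univ.image i) => T r 0) =
        ∑ μ : Fin n, (-(x 0)⁻¹ * x μ.succ) • fun r : ↥(univ.image i) => T r (jc μ.succ) := by
      ext ⟨r, hr⟩
      obtain ⟨ν, -, rfl⟩ := mem_image.1 hr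
      simp [hrow]
    rw [hsum]
    exact sum_mem fun μ _ => smul_mem _ _ (subset_span ⟨jc μ.succ, by simp, rfl⟩)

theorem IsLTToeplitz.det_submatrix_ne_zero_of_hasMaxSpan {F : Type*} [Field F] {j : ℕ}
    {T : Matrix (Fin (j + 1)) (Fin (j + 1)) F} (hT : IsLTToeplitz T) (hmax : HasMaxSpan T) :
    ∀ (s : ℕ) (i jc : Fin s → Fin (j + 1)), StrictMono i → StrictMono jc →
      (∀ ν, jc ν ≤ i ν) → (T.submatrix i jc).det ≠ 0
  | 0, _, _, _, _, _ => by simp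
  | s + 1, i, jc, hi, hjc, hp => by
    obtain ⟨i', jc', hi', hjc', hp', hjc0, heq⟩ := hT.exists_submatrix_eq_of_col_zero hi hjc hp
    rw [← heq]
    intro hdet
    obtain ⟨x, hx, hTx⟩ := Matrix.exists_mulVec_eq_zero_iff.2 hdet
    by_cases hx0 : x 0 = 0
    · exact hT.det_submatrix_ne_zero_of_hasMaxSpan hmax s (i' ∘ Fin.succ) (jc' ∘ Fin.succ)
        (hi'.comp Fin.strictMono_succ) (hjc'.comp Fin.strictMono_succ) (fun ν => hp' _)
        (Matrix.det_submatrix_succ_succ_eq_zero hx hx0 hTx)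
    · exact not_hasMaxSpan_of_mulVec_eq_zero hi'.injective hjc'.injective hjc0 hx0 hTx hmax

theorem superregular_iff_maxSpan_general {F : Type*} [Field F] {j : ℕ}
    (T : Matrix (Fin (j + 1)) (Fin (j + 1)) F) (hT : IsLTToeplitz T) :
    Superregular T ↔
      ∀ S : Finset (Fin (j + 1) ⊕ Fin (j + 1)), S.card = j → Sum.inr 0 ∉ S →
        (fun r => Matrix.fromCols (1 : Matrix (Fin (j + 1)) (Fin (j + 1)) F) T r (Sum.inr 0)) ∉
          Submodule.span F
            ((fun c => fun r => Matrix.fromCols (1 : Matrix (Fin (j + 1)) (Fin (j + 1)) F) T r c) '' ↑S) :=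
  ⟨Superregular.hasMaxSpan, fun h => ⟨hT, hT.det_submatrix_ne_zero_of_hasMaxSpan h⟩⟩

/-- A lower triangular Toeplitz matrix `T` is superregular iff `[I | T]` has
the maximum span property: the first column of `T`, viewed in `[I | T]`, is
not in the span of any other `j` columns of `[I | T]`. -/
theorem superregular_iff_maxSpan {F : Type*} [Field F] [Fintype F] {j : ℕ}
    (T : Matrix (Fin (j + 1)) (Fin (j + 1)) F) (hT : IsLTToeplitz T) :
    Superregular T ↔
      ∀ S : Finset (Fin (j + 1) ⊕ Fin (j + 1)), S.card = j → Sum.inr 0 ∉ S →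
        (fun r => Matrix.fromCols (1 : Matrix (Fin (j + 1)) (Fin (j + 1)) F) T r (Sum.inr 0)) ∉
          Submodule.span F
            ((fun c => fun r => Matrix.fromCols (1 : Matrix (Fin (j + 1)) (Fin (j + 1)) F) T r c) '' ↑S) :=
  superregular_iff_maxSpan_general T hT
end

section
/- Let F be a finite field, let k < n be positive integers, let j ≥ 0, and let T be an l×l superregular matrix over F with l ≥ (j+1)(n−1). Let T' be the (j+1)(n−k) × (j+1)k submatrix of T obtained by intersecting the rows of T indexed by { a(n−1)+r : 0 ≤ a ≤ j, k ≤ r ≤ n−1 } with the columns of T indexed by { a(n−1)+c : 0 ≤ a ≤ j, 1 ≤ c ≤ k } (1-based indices, each index set taken in increasing order). Then T' is a lower block triangular Toeplitz matrix (its (n−k)×k blocks T'_{a,b} depend only on a−b and vanish for a < b), and the matrix [I_{(j+1)(n−k)} | T'] has the maximum span property: none of the first k columns of the block T' is contained in the linear span of any other (j+1)(n−k) − 1 columns of [I_{(j+1)(n−k)} | T']. -/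
/-!
Restricted to the rows of `[I | T']` outside `S`, a dependency between column `(0, c)` and the
columns in `S` is a kernel vector `w` of a square submatrix of `T`, nonzero at the column
`c`, which is `≤` every row index involved. Write the rows as `r₀ < r₁ < ⋯` and the columns as
`c₀ < c₁ < ⋯`. If the submatrix is proper it is invertible by superregularity, a contradiction.
Otherwise some `r ν < c ν`; as `T` is lower triangular, the columns from `c ν` on vanish on
the rows up to `r ν`, so `w` restricts to a kernel vector of the leading `ν × ν` submatrix,
still nonzero at `c ≤ r ν < c ν`, and we conclude by induction on the size.
-/

open Finset Matrix

section LowerTriangular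

variable {F : Type*} [CommRing F] {m : ℕ} {A : Matrix (Fin m) (Fin m) F}

theorem IsLTToeplitz.blockTriangular (hA : IsLTToeplitz A) :
    A.BlockTriangular OrderDual.toDual := by
  obtain ⟨a, ha⟩ := hA
  intro r c hcr
  rw [ha, if_neg (not_le.2 (Fin.lt_def.1 (OrderDual.toDual_lt_toDual.1 hcr)))]

theorem IsLTToeplitz.apply_eq_of_sub_eq (hA : IsLTToeplitz A) {r c r' c' : Fin m}
    (h : (r : ℤ) - c = r' - c') : A r c = A r' c' := by
  obtain ⟨a, ha⟩ := hA
  rw [ha, ha, show (r : ℕ) - c = r' - c' by omega]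
  exact if_congr (by omega) rfl rfl

end LowerTriangular

theorem Matrix.submatrix_mulVec_comp {α l m n o : Type*} [Fintype n] [Fintype o]
    [NonUnitalNonAssocSemiring α] (A : Matrix m n α) (r : l → m) {c : o → n}
    (hc : Function.Injective c) {v : n → α} (hv : ∀ x ∉ Set.range c, v x = 0) :
    A.submatrix r c *ᵥ (v ∘ c) = (A *ᵥ v) ∘ r := by
  funext i
  exact Fintype.sum_of_injective c hc _ _ (fun x hx => by simp [hv x hx]) (fun _ => rfl)

theorem Matrix.BlockTriangular.submatrix_castLE_mulVec {α m : Type*} [LinearOrder m]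
    [NonUnitalNonAssocSemiring α] {A : Matrix m m α} (hA : A.BlockTriangular OrderDual.toDual)
    {s : ℕ} {r c : Fin s → m} (hr : Monotone r) (hc : Monotone c) {ν : Fin s}
    (hν : r ν < c ν) (w : Fin s → α) (μ : Fin ν) :
    (A.submatrix (r ∘ Fin.castLE ν.isLt.le) (c ∘ Fin.castLE ν.isLt.le) *ᵥ
      (w ∘ Fin.castLE ν.isLt.le)) μ = (A.submatrix r c *ᵥ w) (Fin.castLE ν.isLt.le μ) := by
  refine Fintype.sum_of_injective _ (Fin.castLE_injective _) _ _ (fun κ hκ => ?_) (fun _ => rfl)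
  have hνκ : ν ≤ κ := by
    by_contra! h
    exact hκ ⟨⟨κ, h⟩, rfl⟩
  have hμν : Fin.castLE ν.isLt.le μ ≤ ν := Fin.le_def.2 μ.isLt.le
  have hzero : A (r (Fin.castLE _ μ)) (c κ) = 0 :=
    hA (OrderDual.toDual_lt_toDual.2 ((hr hμν).trans_lt (hν.trans_le (hc hνκ))))
  simp [hzero]

section Superregular

variable {F : Type*} [Field F] {m : ℕ} {A : Matrix (Fin m) (Fin m) F}

theorem Superregular.submatrix_mulVec_eq_zero (hA : Superregular A) {s : ℕ}
    {r c : Fin s → Fin m} (hr : StrictMono r) (hc : StrictMono c) {w : Fin s → F}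
    (hw : A.submatrix r c *ᵥ w = 0) {μ : Fin s} (hμ : ∀ ν, c μ ≤ r ν) : w μ = 0 := by
  induction s using Nat.strong_induction_on with
  | _ s ih =>
  by_cases hproper : ∀ ν, (c ν : ℕ) ≤ r ν
  · exact congrFun (eq_zero_of_mulVec_eq_zero (hA.2 s r c hr hc hproper) hw) μ
  obtain ⟨ν, hν⟩ := not_forall.1 hproper
  rw [not_le, ← Fin.lt_def] at hν
  have hμν : μ < ν := hc.lt_iff_lt.1 ((hμ ν).trans_lt hν)
  have hcast := Fin.strictMono_castLE ν.isLt.le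
  refine ih ν ν.isLt (hr.comp hcast) (hc.comp hcast) (w := w ∘ Fin.castLE ν.isLt.le)
    ?_ (μ := ⟨μ, hμν⟩) (fun ν' => hμ _)
  funext μ'
  rw [hA.1.blockTriangular.submatrix_castLE_mulVec hr.monotone hc.monotone hν, hw]
  rfl

theorem Superregular.apply_eq_zero_of_mulVec_eq_zero (hA : Superregular A)
    {I J : Finset (Fin m)} (hIJ : #J = #I) {v : Fin m → F} (hv : ∀ x ∉ J, v x = 0)
    (hAv : ∀ i ∈ I, (A *ᵥ v) i = 0) {x₀ : Fin m} (hx₀ : ∀ i ∈ I, x₀ ≤ i) : v x₀ = 0 := by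
  by_cases hx₀J : x₀ ∉ J
  · exact hv x₀ hx₀J
  set r := I.orderEmbOfFin hIJ.symm
  set c := J.orderEmbOfFin rfl
  obtain ⟨μ, rfl⟩ : x₀ ∈ Set.range c := by
    rw [range_orderEmbOfFin]
    exact not_not.1 hx₀J
  have hw : A.submatrix r c *ᵥ (v ∘ c) = 0 := by
    rw [A.submatrix_mulVec_comp r c.injective (by simpa [c] using hv)]
    funext ν
    exact hAv _ (orderEmbOfFin_mem _ _ _)
  exact hA.submatrix_mulVec_eq_zero r.strictMono c.strictMono hw
    (fun ν => hx₀ _ (orderEmbOfFin_mem _ _ _))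

theorem Superregular.apply_eq_zero_of_submatrix_mulVec_eq_zero {ι κ : Type*} [Fintype κ]
    (hA : Superregular A) {ρ : ι → Fin m} {σ : κ → Fin m} (hρ : Function.Injective ρ)
    (hσ : Function.Injective σ) {R : Finset ι} {Q : Finset κ} (hRQ : #Q = #R) {w : κ → F}
    (hwQ : ∀ q ∉ Q, w q = 0) (hw : ∀ i ∈ R, (A.submatrix ρ σ *ᵥ w) i = 0) {q₀ : κ}
    (hq₀ : ∀ i ∈ R, σ q₀ ≤ ρ i) : w q₀ = 0 := by
  classical
  have hext : ∀ x ∉ Set.range σ, Function.extend σ w 0 x = 0 :=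
    fun x hx => Function.extend_apply' _ _ _ hx
  rw [← hσ.extend_apply w 0 q₀]
  refine hA.apply_eq_zero_of_mulVec_eq_zero (I := R.image ρ) (J := Q.image σ)
    (by rw [card_image_of_injective _ hρ, card_image_of_injective _ hσ, hRQ]) ?_ ?_ ?_
  · intro x hx
    by_cases hxσ : x ∈ Set.range σ
    · obtain ⟨q, rfl⟩ := hxσ
      rw [hσ.extend_apply]
      exact hwQ q (fun hq => hx (mem_image_of_mem _ hq))
    · exact hext x hxσ
  · simp only [mem_image, forall_exists_index, and_imp, forall_apply_eq_imp_iff₂]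
    intro i hi
    have hcomp := congrFun (A.submatrix_mulVec_comp ρ hσ hext) i
    rw [Function.extend_comp hσ] at hcomp
    exact hcomp.symm.trans (hw i hi)
  · simpa using hq₀

end Superregular

theorem exists_mulVec_eq_zero_of_mem_span_fromCols {ι κ F : Type*} [Fintype ι] [Fintype κ]
    [DecidableEq ι] [DecidableEq κ] [CommRing F] [Nontrivial F] (H : Matrix ι κ F)
    {S : Finset (ι ⊕ κ)} {q₀ : κ} (hq₀ : Sum.inr q₀ ∉ S)
    (hmem : (fun i => fromCols (1 : Matrix ι ι F) H i (Sum.inr q₀)) ∈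
      Submodule.span F ((fun u i => fromCols (1 : Matrix ι ι F) H i u) '' ↑S)) :
    ∃ w : κ → F, w q₀ ≠ 0 ∧ (∀ q ∉ insert q₀ S.toRight, w q = 0) ∧
      ∀ i ∉ S.toLeft, (H *ᵥ w) i = 0 := by
  obtain ⟨lc, hlc, hsum⟩ := (Finsupp.mem_span_image_iff_linearCombination F).1 hmem
  have hlcS : ∀ u ∉ S, lc u = 0 := fun u hu => Finsupp.notMem_support_iff.1 (fun h => hu (hlc h))
  refine ⟨⇑lc ∘ Sum.inr - Pi.single q₀ 1, by simp [hlcS _ hq₀], fun q hq => ?_,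
    fun i hiS => ?_⟩
  · rw [mem_insert, not_or, mem_toRight] at hq
    simp [hlcS _ hq.2, hq.1]
  · have hrel : fromCols (1 : Matrix ι ι F) H *ᵥ lc =
        fun i => fromCols (1 : Matrix ι ι F) H i (Sum.inr q₀) := by
      rw [← hsum]
      ext i
      simp [Finsupp.linearCombination_apply, Finsupp.sum_fintype, mulVec, dotProduct, mul_comm]
    have hi := congrFun hrel i
    rw [fromCols_mulVec, one_mulVec] at hi
    simp only [Pi.add_apply, Function.comp_apply, hlcS _ (mt mem_toLeft.2 hiS), zero_add] at hi
    rw [mulVec_sub, Pi.sub_apply, hi, mulVec_single_one]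
    simp

theorem eq_and_eq_of_mul_add_eq_mul_add {N a a' e e' : ℕ} (he : e < N) (he' : e' < N)
    (h : a * N + e = a' * N + e') : a = a' ∧ e = e' := by
  have hdiv := (Nat.div_mod_unique (by omega)).2 ⟨(by ring : e + N * a = a * N + e), he⟩
  have hdiv' := (Nat.div_mod_unique (by omega)).2 ⟨(by ring : e' + N * a' = a' * N + e'), he'⟩
  rw [h] at hdiv
  exact ⟨hdiv.1.symm.trans hdiv'.1, hdiv.2.symm.trans hdiv'.2⟩

theorem mul_add_lt_succ_mul {a j N e : ℕ} (ha : a ≤ j) (he : e < N) :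
    a * N + e < (j + 1) * N := by
  nlinarith

section BlockIndex

variable {n k j l : ℕ}

def blockRowIndex (hk : 0 < k) (hkn : k < n) (hl : (j + 1) * (n - 1) ≤ l)
    (i : Fin (j + 1) × Fin (n - k)) : Fin l :=
  ⟨(i.1 : ℕ) * (n - 1) + k + (i.2 : ℕ) - 1, by
    have := mul_add_lt_succ_mul i.1.is_le (show k - 1 + i.2 < n - 1 by omega)
    omega⟩

def blockColIndex (hkn : k < n) (hl : (j + 1) * (n - 1) ≤ l)
    (q : Fin (j + 1) × Fin k) : Fin l :=
  ⟨(q.1 : ℕ) * (n - 1) + (q.2 : ℕ),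
    (mul_add_lt_succ_mul q.1.is_le (show (q.2 : ℕ) < n - 1 by omega)).trans_le hl⟩

variable (hk : 0 < k) (hkn : k < n) (hl : (j + 1) * (n - 1) ≤ l)

theorem blockRowIndex_injective : Function.Injective (blockRowIndex hk hkn hl) := by
  rintro ⟨a, r⟩ ⟨a', r'⟩ h
  have h' : (a : ℕ) * (n - 1) + (k - 1 + r) = a' * (n - 1) + (k - 1 + r') := by
    have := Fin.val_eq_of_eq h
    simp only [blockRowIndex] at this
    omega
  obtain ⟨ha, hr⟩ := eq_and_eq_of_mul_add_eq_mul_add (by have := r.isLt; omega)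
    (by have := r'.isLt; omega) h'
  simp only [Prod.mk.injEq, Fin.ext_iff]
  omega

theorem blockColIndex_injective : Function.Injective (blockColIndex (j := j) hkn hl) := by
  rintro ⟨b, c⟩ ⟨b', c'⟩ h
  obtain ⟨hb, hc⟩ := eq_and_eq_of_mul_add_eq_mul_add (by omega) (by omega) (Fin.val_eq_of_eq h)
  exact Prod.ext (Fin.ext hb) (Fin.ext hc)

theorem blockRowIndex_sub_blockColIndex (a : Fin (j + 1)) (r : Fin (n - k)) (b : Fin (j + 1))
    (c : Fin k) :
    ((blockRowIndex hk hkn hl (a, r) : ℕ) : ℤ) - (blockColIndex hkn hl (b, c) : ℕ) =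
      ((a : ℤ) - b) * ((n : ℤ) - 1) + ((k : ℤ) - 1 + r - c) := by
  simp only [blockRowIndex, blockColIndex]
  push_cast [Nat.cast_sub (show 1 ≤ (a : ℕ) * (n - 1) + k + r by omega),
    Nat.cast_sub (show 1 ≤ n by omega)]
  ring

theorem blockRowIndex_lt_blockColIndex {a b : Fin (j + 1)} (hab : a < b) (r : Fin (n - k))
    (c : Fin k) : blockRowIndex hk hkn hl (a, r) < blockColIndex hkn hl (b, c) := by
  have hdiff := blockRowIndex_sub_blockColIndex hk hkn hl a r b c
  have hab' : (a : ℤ) + 1 ≤ b := by exact_mod_cast Fin.lt_def.1 hab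
  have hr : (r : ℤ) < (n : ℤ) - k := by have := r.isLt; omega
  rw [Fin.lt_def]
  nlinarith

theorem blockColIndex_le_blockRowIndex {a b : Fin (j + 1)} (hba : b ≤ a) (r : Fin (n - k))
    (c : Fin k) : blockColIndex hkn hl (b, c) ≤ blockRowIndex hk hkn hl (a, r) := by
  have hdiff := blockRowIndex_sub_blockColIndex hk hkn hl a r b c
  have hba' : (b : ℤ) ≤ a := by exact_mod_cast Fin.le_def.1 hba
  have hc : (c : ℤ) < k := by exact_mod_cast c.isLt
  rw [Fin.le_def]
  nlinarith

end BlockIndex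

/-- From an `l × l` superregular matrix with `l ≥ (j+1)(n-1)` one extracts a
lower block triangular Toeplitz matrix `T'` (rows indexed, 1-based, by
`a(n-1)+r` for `0 ≤ a ≤ j`, `k ≤ r ≤ n-1`; columns by `a(n-1)+c` for
`0 ≤ a ≤ j`, `1 ≤ c ≤ k`) such that `[I | T']` has the maximum span property.
Here `T'` is indexed by blocks: row `(a, r)` is the 0-based row
`a(n-1) + (k-1) + r` of `T` and column `(b, c)` is the 0-based column
`b(n-1) + c` of `T`. -/
theorem superregular_gives_maxSpan {F : Type*} [Field F]
    {n k j l : ℕ} (hk : 0 < k) (hkn : k < n) (hl : (j + 1) * (n - 1) ≤ l)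
    (T : Matrix (Fin l) (Fin l) F) (hT : Superregular T)
    (T' : Matrix (Fin (j + 1) × Fin (n - k)) (Fin (j + 1) × Fin k) F)
    (hT' : ∀ (a : Fin (j + 1)) (r : Fin (n - k)) (b : Fin (j + 1)) (c : Fin k),
      T' (a, r) (b, c) =
        T ⟨(a : ℕ) * (n - 1) + k + (r : ℕ) - 1, by
            have h1 : (a : ℕ) ≤ j := Nat.lt_succ_iff.mp a.isLt
            have h2 : (r : ℕ) < n - k := r.isLt
            have h3 : (a : ℕ) * (n - 1) ≤ j * (n - 1) := Nat.mul_le_mul_right _ h1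
            have h4 : (j + 1) * (n - 1) = j * (n - 1) + (n - 1) := by ring
            omega⟩
          ⟨(b : ℕ) * (n - 1) + (c : ℕ), by
            have h1 : (b : ℕ) ≤ j := Nat.lt_succ_iff.mp b.isLt
            have h2 : (c : ℕ) < k := c.isLt
            have h3 : (b : ℕ) * (n - 1) ≤ j * (n - 1) := Nat.mul_le_mul_right _ h1
            have h4 : (j + 1) * (n - 1) = j * (n - 1) + (n - 1) := by ring
            omega⟩) :
    -- `T'` is lower block triangular:
    (∀ (a b : Fin (j + 1)) (r : Fin (n - k)) (c : Fin k),
        (a : ℕ) < (b : ℕ) → T' (a, r) (b, c) = 0) ∧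
    -- the blocks of `T'` depend only on the difference `a - b`:
    (∀ (a b a' b' : Fin (j + 1)) (r : Fin (n - k)) (c : Fin k),
        (a : ℤ) - (b : ℤ) = (a' : ℤ) - (b' : ℤ) →
        T' (a, r) (b, c) = T' (a', r) (b', c)) ∧
    -- `[I | T']` has the maximum span property:
    (∀ (c : Fin k)
        (S : Finset ((Fin (j + 1) × Fin (n - k)) ⊕ (Fin (j + 1) × Fin k))),
        S.card = (j + 1) * (n - k) - 1 → Sum.inr (0, c) ∉ S →
        (fun rr => Matrix.fromCols (1 : Matrix (Fin (j + 1) × Fin (n - k)) (Fin (j + 1) × Fin (n - k)) F) T' rr (Sum.inr (0, c))) ∉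
          Submodule.span F
            ((fun cc => fun rr => Matrix.fromCols (1 : Matrix (Fin (j + 1) × Fin (n - k)) (Fin (j + 1) × Fin (n - k)) F) T' rr cc) '' ↑S)) := by
  have hT'eq : T' = T.submatrix (blockRowIndex hk hkn hl) (blockColIndex hkn hl) := by
    ext ⟨a, r⟩ ⟨b, c⟩
    exact hT' a r b c
  subst hT'eq
  refine ⟨fun a b r c hab => hT.1.blockTriangular
      (OrderDual.toDual_lt_toDual.2 (blockRowIndex_lt_blockColIndex hk hkn hl hab r c)),
    fun a b a' b' r c hab => hT.1.apply_eq_of_sub_eq (by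
      rw [blockRowIndex_sub_blockColIndex, blockRowIndex_sub_blockColIndex, hab]),
    fun c S hS hcS hmem => ?_⟩
  classical
  obtain ⟨w, hw₀, hwS, hw⟩ := exists_mulVec_eq_zero_of_mem_span_fromCols _ hcS hmem
  refine hw₀ (hT.apply_eq_zero_of_submatrix_mulVec_eq_zero (blockRowIndex_injective hk hkn hl)
    (blockColIndex_injective hkn hl) ?_ hwS (fun i hi => hw i (mem_compl.1 hi))
    (fun ⟨a, r⟩ _ => blockColIndex_le_blockRowIndex hk hkn hl (Fin.zero_le a) r c))
  have hN : 0 < (j + 1) * (n - k) := Nat.mul_pos (Nat.succ_pos j) (by omega)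
  have hS' := card_toLeft_add_card_toRight (u := S)
  rw [card_insert_of_notMem (mt mem_toRight.1 hcS), card_compl, Fintype.card_prod,
    Fintype.card_fin, Fintype.card_fin]
  omega
end

section
/- Let F be a finite field and let A be a (γ+1)×(γ+1) superregular matrix over F. Then A is invertible, A⁻¹ is again a lower triangular Toeplitz matrix, and A⁻¹ is superregular. -/
/-!
Lower triangular Toeplitz matrices of size `m` are the image of the power series ring under the
multiplicative map `f ↦ (coeff (r - c) f)_{c ≤ r}` (truncation modulo `X ^ m`), so `A⁻¹` is the
Toeplitz matrix of the inverse power series. For the minors, Jacobi's complementary minor identity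
gives `det A⁻¹[I, J] = ± det A⁻¹ * det A[Jᶜ, Iᶜ]`, and counting the elements below each threshold
shows that if `J` lies entrywise below `I` then `Iᶜ` lies entrywise below `Jᶜ`, so the
complementary minor of `A` is again proper.
-/

open Finset PowerSeries Function Matrix

def HasNonzeroProperMinors {R : Type*} [CommRing R] {m : ℕ} (A : Matrix (Fin m) (Fin m) R) :
    Prop :=
  ∀ (s : ℕ) (i j : Fin s → Fin m), StrictMono i → StrictMono j →
    (∀ ν : Fin s, (j ν : ℕ) ≤ (i ν : ℕ)) → (A.submatrix i j).det ≠ 0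

namespace Matrix

variable {R : Type*} [CommRing R] {m : ℕ}

noncomputable def ltToeplitz (m : ℕ) (f : R⟦X⟧) : Matrix (Fin m) (Fin m) R :=
  of fun r c => if (c : ℕ) ≤ r then coeff ((r : ℕ) - c) f else 0

theorem ltToeplitz_apply (f : R⟦X⟧) (r c : Fin m) :
    ltToeplitz m f r c = if (c : ℕ) ≤ r then coeff ((r : ℕ) - c) f else 0 := rfl

theorem ltToeplitz_one : ltToeplitz m (1 : R⟦X⟧) = 1 := by
  ext r c
  simp only [ltToeplitz_apply, coeff_one, one_apply, Fin.ext_iff]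
  split_ifs <;> first | rfl | omega

theorem ltToeplitz_mul (f g : R⟦X⟧) :
    ltToeplitz m (f * g) = ltToeplitz m f * ltToeplitz m g := by
  ext r c
  simp only [mul_apply, ltToeplitz_apply]
  rw [Fin.sum_univ_eq_sum_range
    (fun k => (if k ≤ r then coeff ((r : ℕ) - k) f else 0) *
      if (c : ℕ) ≤ k then coeff (k - c) g else 0)]
  simp_rw [ite_zero_mul_ite_zero, ← sum_filter]
  split_ifs with hcr
  · have hfilter :
        (range m).filter (fun k => k ≤ (r : ℕ) ∧ (c : ℕ) ≤ k) = Ico (c : ℕ) (r + 1) := by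
      ext k
      simp only [mem_filter, mem_range, mem_Ico]
      omega
    rw [hfilter, sum_Ico_eq_sum_range, mul_comm f, coeff_mul,
      Nat.sum_antidiagonal_eq_sum_range_succ_mk, show (r : ℕ) + 1 - c = (r - c : ℕ) + 1 by omega]
    refine sum_congr rfl fun k _ => ?_
    rw [mul_comm]
    congr 3 <;> omega
  · refine (sum_eq_zero fun k hk => ?_).symm
    simp only [mem_filter] at hk
    omega

theorem isLTToeplitz_ltToeplitz (f : R⟦X⟧) : IsLTToeplitz (ltToeplitz m f) :=
  ⟨fun n => coeff n f, fun _ _ => rfl⟩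

theorem det_mul_det_toBlocks₁₁_of_mul_eq_one {m n : Type*} [Fintype m] [Fintype n]
    [DecidableEq m] [DecidableEq n] {M N : Matrix (m ⊕ n) (m ⊕ n) R} (h : M * N = 1) :
    M.det * N.toBlocks₁₁.det = M.toBlocks₂₂.det := by
  rw [← fromBlocks_toBlocks M, ← fromBlocks_toBlocks N, fromBlocks_multiply,
    ← fromBlocks_one, fromBlocks_inj] at h
  have hMN : M * fromBlocks N.toBlocks₁₁ 0 N.toBlocks₂₁ 1
      = fromBlocks 1 M.toBlocks₁₂ 0 M.toBlocks₂₂ := by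
    rw [← fromBlocks_toBlocks M, fromBlocks_multiply]
    simp [h.1, h.2.2.1]
  simpa [det_fromBlocks_zero₁₂, det_fromBlocks_zero₂₁] using congrArg det hMN

theorem det_submatrix_mul_det_submatrix_of_mul_eq_one {ι m n : Type*} [Fintype ι] [Fintype m]
    [Fintype n] [DecidableEq ι] [DecidableEq m] [DecidableEq n] {A B : Matrix ι ι R}
    (h : A * B = 1) (e f : m ⊕ n ≃ ι) :
    (A.submatrix f e).det * (B.submatrix (e ∘ Sum.inl) (f ∘ Sum.inl)).det
      = (A.submatrix (f ∘ Sum.inr) (e ∘ Sum.inr)).det :=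
  det_mul_det_toBlocks₁₁_of_mul_eq_one (N := B.submatrix e f)
    (by rw [submatrix_mul_equiv, h, submatrix_one_equiv])

end Matrix

section CardFilter

variable {α : Type*} [DecidableEq α] {s : ℕ}

theorem card_filter_image_univ_of_injective {x : Fin s → α} (hx : Injective x)
    (p : α → Prop) [DecidablePred p] : #((univ.image x).filter p) = #{ν | p (x ν)} := by
  rw [filter_image, card_image_of_injective _ hx]

variable [Fintype α]

theorem card_compl_image_univ_of_injective {x : Fin s → α} (hx : Injective x) :
    #(univ.image x)ᶜ = Fintype.card α - s := by
  rw [card_compl, card_image_of_injective _ hx, card_univ, Fintype.card_fin]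

theorem card_filter_compl_add_card_filter (X : Finset α) (p : α → Prop) [DecidablePred p] :
    #(Xᶜ.filter p) + #(X.filter p) = #{a | p a} := by
  rw [← card_union_of_disjoint (disjoint_filter_filter disjoint_compl_left), ← filter_union,
    union_comm, union_compl]

end CardFilter

section ComplementEnumeration

variable {α : Type*} [LinearOrder α]

theorem le_of_forall_card_filter_le {u : ℕ} {x y : Fin u → α} (hx : StrictMono x)
    (hy : Monotone y) (h : ∀ t, #{κ | y κ ≤ t} ≤ #{κ | x κ ≤ t}) (μ : Fin u) : x μ ≤ y μ := by
  by_contra! hlt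
  have hy' : Iic μ ⊆ univ.filter (fun κ => y κ ≤ y μ) := fun κ hκ => by
    simpa using hy (mem_Iic.1 hκ)
  have hx' : univ.filter (fun κ => x κ ≤ y μ) ⊆ Iio μ := fun κ hκ =>
    mem_Iio.2 (hx.lt_iff_lt.1 ((mem_filter.1 hκ).2.trans_lt hlt))
  have hcard_y := card_le_card hy'
  have hcard_x := card_le_card hx'
  rw [Fin.card_Iic] at hcard_y
  rw [Fin.card_Iio] at hcard_x
  have := h (y μ)
  omega

variable [Fintype α]

theorem orderEmbOfFin_compl_image_le {s u : ℕ} {i j : Fin s → α} (hi : Injective i)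
    (hj : Injective j) (hle : ∀ ν, j ν ≤ i ν) (hci : #(univ.image i)ᶜ = u)
    (hcj : #(univ.image j)ᶜ = u) (μ : Fin u) :
    (univ.image i)ᶜ.orderEmbOfFin hci μ ≤ (univ.image j)ᶜ.orderEmbOfFin hcj μ := by
  refine le_of_forall_card_filter_le (orderEmbOfFin _ _).strictMono
    (orderEmbOfFin _ _).monotone (fun t => ?_) μ
  rw [← card_filter_image_univ_of_injective (orderEmbOfFin _ _).injective (· ≤ t),
    ← card_filter_image_univ_of_injective (orderEmbOfFin _ _).injective (· ≤ t),
    image_orderEmbOfFin_univ, image_orderEmbOfFin_univ]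
  have hij : #((univ.image i).filter (· ≤ t)) ≤ #((univ.image j).filter (· ≤ t)) := by
    rw [card_filter_image_univ_of_injective hi, card_filter_image_univ_of_injective hj]
    exact card_le_card fun ν hν => by
      simp only [mem_filter, mem_univ, true_and] at hν ⊢
      exact (hle ν).trans hν
  have hI := card_filter_compl_add_card_filter (univ.image i) (· ≤ t)
  have hJ := card_filter_compl_add_card_filter (univ.image j) (· ≤ t)
  omega

theorem bijective_sumElim_orderEmbOfFin_compl {s u : ℕ} {i : Fin s → α} (hi : Injective i)
    (h : #(univ.image i)ᶜ = u) :
    Bijective (Sum.elim i ((univ.image i)ᶜ.orderEmbOfFin h)) := by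
  rw [Fintype.bijective_iff_injective_and_card]
  refine ⟨hi.sumElim (orderEmbOfFin _ h).injective fun a b hab => ?_, ?_⟩
  · have := orderEmbOfFin_mem _ h b
    rw [← hab, mem_compl] at this
    exact this (mem_image_of_mem i (mem_univ a))
  · have hs := Fintype.card_le_of_injective i hi
    rw [Fintype.card_fin] at hs
    rw [Fintype.card_sum, Fintype.card_fin, Fintype.card_fin, ← h,
      card_compl_image_univ_of_injective hi]
    omega

end ComplementEnumeration

theorem HasNonzeroProperMinors.apply_self_ne_zero {R : Type*} [CommRing R] {m : ℕ}
    {A : Matrix (Fin m) (Fin m) R} (hA : HasNonzeroProperMinors A) (r : Fin m) : A r r ≠ 0 := by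
  simpa using hA 1 (fun _ => r) (fun _ => r) (Subsingleton.strictMono _)
    (Subsingleton.strictMono _) fun _ => le_rfl

theorem HasNonzeroProperMinors.of_mul_eq_one {R : Type*} [CommRing R] {n : ℕ}
    {A B : Matrix (Fin n) (Fin n) R} (hAB : A * B = 1) (hA : HasNonzeroProperMinors A) :
    HasNonzeroProperMinors B := by
  intro s i j hi hj hle
  have hci : #(univ.image i)ᶜ = n - s := by
    rw [card_compl_image_univ_of_injective hi.injective, Fintype.card_fin]
  have hcj : #(univ.image j)ᶜ = n - s := by
    rw [card_compl_image_univ_of_injective hj.injective, Fintype.card_fin]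
  set i' := (univ.image i)ᶜ.orderEmbOfFin hci
  set j' := (univ.image j)ᶜ.orderEmbOfFin hcj
  have hproper : ∀ μ, (i' μ : ℕ) ≤ j' μ :=
    orderEmbOfFin_compl_image_le hi.injective hj.injective hle hci hcj
  have hjacobi : _ * (B.submatrix i j).det = (A.submatrix j' i').det :=
    det_submatrix_mul_det_submatrix_of_mul_eq_one hAB
      (.ofBijective _ (bijective_sumElim_orderEmbOfFin_compl hi.injective hci))
      (.ofBijective _ (bijective_sumElim_orderEmbOfFin_compl hj.injective hcj))
  intro h0
  refine hA _ j' i' j'.strictMono i'.strictMono hproper ?_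
  rw [← hjacobi, h0, mul_zero]

theorem superregular_inv_general {F : Type*} [Field F] {γ : ℕ}
    (A : Matrix (Fin (γ + 1)) (Fin (γ + 1)) F) (hA : Superregular A) :
    IsUnit A ∧ IsLTToeplitz A⁻¹ ∧ Superregular A⁻¹ := by
  obtain ⟨⟨a, ha⟩, hminors : HasNonzeroProperMinors A⟩ := hA
  have hA : A = ltToeplitz (γ + 1) (mk a) := by
    ext r c
    rw [ha, ltToeplitz_apply, coeff_mk]
  have ha0 : constantCoeff (mk a) ≠ 0 := by
    simpa [ha] using hminors.apply_self_ne_zero 0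
  have hinv : A * ltToeplitz (γ + 1) (mk a)⁻¹ = 1 := by
    rw [hA, ← ltToeplitz_mul, PowerSeries.mul_inv_cancel _ ha0, ltToeplitz_one]
  rw [inv_eq_right_inv hinv]
  exact ⟨.of_mul_eq_one _ hinv, isLTToeplitz_ltToeplitz _,
    isLTToeplitz_ltToeplitz _, hminors.of_mul_eq_one hinv⟩

/-- The inverse of a superregular matrix is again a (lower triangular Toeplitz)
superregular matrix. -/
theorem superregular_inv {F : Type*} [Field F] [Fintype F] {γ : ℕ}
    (A : Matrix (Fin (γ + 1)) (Fin (γ + 1)) F) (hA : Superregular A) :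
    IsUnit A ∧ IsLTToeplitz A⁻¹ ∧ Superregular A⁻¹ :=
  superregular_inv_general A hA
end

section
/- Let F be a finite field, let γ ≥ 2, and let A be a (γ+1)×(γ+1) superregular matrix over F. Then A ≠ A⁻¹. -/
/-- For `γ ≥ 2`, a `(γ+1) × (γ+1)` superregular matrix is never equal to its
own inverse. -/
theorem superregular_ne_inv {F : Type*} [Field F] [Fintype F] {γ : ℕ}
    (hγ : 2 ≤ γ) (A : Matrix (Fin (γ + 1)) (Fin (γ + 1)) F)
    (hA : Superregular A) : A ≠ A⁻¹ := by
  obtain ⟨⟨a, ha⟩, hsub⟩ := hA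
  intro heq
  have e0 : Fin (γ+1) := ⟨0, by omega⟩
  -- named indices
  let i0 : Fin (γ+1) := ⟨0, by omega⟩
  let i1 : Fin (γ+1) := ⟨1, by omega⟩
  let i2 : Fin (γ+1) := ⟨2, by omega⟩
  have hdet : IsUnit A.det := by
    have := hsub (γ+1) id id strictMono_id strictMono_id (fun ν => le_rfl)
    simpa [isUnit_iff_ne_zero] using this
  have hAA : A * A = 1 := by
    nth_rewrite 2 [heq]
    exact Matrix.mul_nonsing_inv A hdet
  have hentry : ∀ r c : Fin (γ+1), (c:ℕ) ≤ (r:ℕ) → A r c ≠ 0 := by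
    intro r c h
    have hs := hsub 1 (fun _ => r) (fun _ => c)
      (by intro x y hxy; exact absurd hxy (by omega))
      (by intro x y hxy; exact absurd hxy (by omega))
      (fun _ => h)
    simpa [Matrix.det_fin_one] using hs
  have ha0 : a 0 ≠ 0 := by
    have h := hentry i0 i0 le_rfl
    rwa [ha, if_pos le_rfl] at h
  have ha1 : a 1 ≠ 0 := by
    have h := hentry i1 i0 (by norm_num)
    rwa [ha, if_pos (by norm_num)] at h
  -- entry (1,0) of A*A
  have h10 : a 1 * a 0 + a 0 * a 1 = 0 := by
    have h := congrFun (congrFun hAA i1) i0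
    rw [Matrix.mul_apply] at h
    have hone : (1 : Matrix (Fin (γ+1)) (Fin (γ+1)) F) i1 i0 = 0 := by
      rw [Matrix.one_apply_ne]
      simp [i0, i1, Fin.ext_iff]
    rw [hone, ← Finset.sum_subset (Finset.subset_univ ({i0, i1} : Finset (Fin (γ+1))))] at h
    · rw [Finset.sum_pair (by simp [i0, i1, Fin.ext_iff])] at h
      rw [ha i1 i0, ha i0 i0, ha i1 i1] at h
      simpa [i0, i1] using h
    · intro k _ hk
      simp only [Finset.mem_insert, Finset.mem_singleton] at hk
      push_neg at hk
      have hk0 : (k:ℕ) ≠ 0 := fun hh => hk.1 (Fin.ext hh)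
      have hk1 : (k:ℕ) ≠ 1 := fun hh => hk.2 (Fin.ext hh)
      rw [ha i1 k, if_neg (by simp [i1]; omega)]
      ring
  -- entry (2,0) of A*A
  have h20 : a 2 * a 0 + (a 1 * a 1 + a 0 * a 2) = 0 := by
    have h := congrFun (congrFun hAA i2) i0
    rw [Matrix.mul_apply] at h
    have hone : (1 : Matrix (Fin (γ+1)) (Fin (γ+1)) F) i2 i0 = 0 := by
      rw [Matrix.one_apply_ne]
      simp [i0, i2, Fin.ext_iff]
    rw [hone, ← Finset.sum_subset (Finset.subset_univ ({i0, i1, i2} : Finset (Fin (γ+1))))] at h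
    · rw [Finset.sum_insert (by simp [i0, i1, i2, Fin.ext_iff]),
          Finset.sum_pair (by simp [i1, i2, Fin.ext_iff])] at h
      rw [ha i2 i0, ha i0 i0, ha i2 i1, ha i1 i0, ha i2 i2] at h
      simpa [i0, i1, i2] using h
    · intro k _ hk
      simp only [Finset.mem_insert, Finset.mem_singleton] at hk
      push_neg at hk
      have hk0 : (k:ℕ) ≠ 0 := fun hh => hk.1 (Fin.ext hh)
      have hk1 : (k:ℕ) ≠ 1 := fun hh => hk.2.1 (Fin.ext hh)
      have hk2 : (k:ℕ) ≠ 2 := fun hh => hk.2.2 (Fin.ext hh)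
      rw [ha i2 k, if_neg (by simp [i2]; omega)]
      ring
  have h2 : (2:F) = 0 := by
    have hx : (2:F) * (a 0 * a 1) = 0 := by linear_combination h10
    rcases mul_eq_zero.mp hx with h | h
    · exact h
    · exact absurd h (mul_ne_zero ha0 ha1)
  have hsq : a 1 * a 1 = 0 := by linear_combination h20 - a 0 * a 2 * h2
  exact ha1 (mul_self_eq_zero.mp hsq)
end

section
/- Let F be a finite field and let γ ≥ 2. Then the number of (γ+1)×(γ+1) superregular matrices over F is even. -/
/-! Auxiliary machinery for the parity of the number of superregular matrices. -/

section Involution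

open Finset in
theorem even_card_of_fpf_involution {α : Type*} [Fintype α] [DecidableEq α]
    (f : α → α) (hf : ∀ a, f (f a) = a) (hne : ∀ a, f a ≠ a) :
    Even (Fintype.card α) := by
  suffices H : ∀ n (s : Finset α), s.card = n → (∀ a ∈ s, f a ∈ s) → Even s.card by
    exact H _ Finset.univ rfl (fun a _ => Finset.mem_univ _)
  intro n
  induction n using Nat.strong_induction_on with
  | _ n ih =>
    intro s hcard hcl
    rcases Finset.eq_empty_or_nonempty s with rfl | ⟨a, ha⟩
    · simp
    · have hfa : f a ∈ s := hcl a ha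
      set s' := s \ {a, f a} with hs'
      have hcl' : ∀ b ∈ s', f b ∈ s' := by
        intro b hb
        rw [hs', Finset.mem_sdiff] at hb ⊢
        refine ⟨hcl b hb.1, ?_⟩
        simp only [Finset.mem_insert, Finset.mem_singleton] at hb ⊢
        push_neg at hb ⊢
        refine ⟨fun h => hb.2.2 (by rw [← h, hf]), fun h => hb.2.1 ?_⟩
        have := congrArg f h; rwa [hf, hf] at this
      have hpair : ({a, f a} : Finset α) ⊆ s := by
        intro x hx; simp only [Finset.mem_insert, Finset.mem_singleton] at hx
        rcases hx with rfl | rfl; exact ha; exact hfa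
      have hc2 : ({a, f a} : Finset α).card = 2 := by
        rw [Finset.card_insert_of_notMem (by simp [Ne.symm (hne a)]), Finset.card_singleton]
      have hcs' : s'.card = s.card - 2 := by
        rw [hs', Finset.card_sdiff_of_subset hpair, hc2]
      have h2le : 2 ≤ s.card := by
        calc 2 = ({a, f a} : Finset α).card := hc2.symm
        _ ≤ s.card := Finset.card_le_card hpair
      have := ih (s.card - 2) (by omega) s' (by omega) hcl'
      rw [hcs'] at this
      have : Even (s.card - 2 + 2) := this.add (by norm_num)
      rwa [Nat.sub_add_cancel h2le] at this

end Involution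

section ToeplitzInverse

variable {F : Type*} [Field F]

/-- The first column of the inverse of a lower triangular Toeplitz matrix. -/
def invCol (a : ℕ → F) : ℕ → F
  | n => (a 0)⁻¹ * ((if n = 0 then 1 else 0) -
      ∑ d ∈ (Finset.range n).attach, a (n - d.1) * invCol a d.1)
  termination_by n => n
  decreasing_by exact Finset.mem_range.mp d.2

theorem invCol_conv (a : ℕ → F) (ha : a 0 ≠ 0) (n : ℕ) :
    ∑ d ∈ Finset.range (n + 1), a (n - d) * invCol a d = if n = 0 then 1 else 0 := by
  rw [Finset.sum_range_succ, invCol]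
  rw [← Finset.sum_attach (Finset.range n) (fun d => a (n - d) * invCol a d)]
  rw [Nat.sub_self, ← mul_assoc, mul_inv_cancel₀ ha, one_mul]
  ring

/-- The lower triangular Toeplitz matrix with given first column. -/
def toepMat (m : ℕ) (b : ℕ → F) : Matrix (Fin m) (Fin m) F :=
  Matrix.of fun r c => if (c : ℕ) ≤ (r : ℕ) then b ((r : ℕ) - (c : ℕ)) else 0

set_option linter.unnecessarySeqFocus false in
theorem toep_mul_invCol (m : ℕ) (a : ℕ → F) (ha : a 0 ≠ 0) :
    toepMat m a * toepMat m (invCol a) = 1 := by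
  ext r c
  rw [Matrix.mul_apply, Matrix.one_apply]
  simp only [toepMat, Matrix.of_apply]
  rw [Fin.sum_univ_eq_sum_range
    (fun k => (if k ≤ (r:ℕ) then a ((r:ℕ) - k) else 0) * (if (c:ℕ) ≤ k then invCol a (k - (c:ℕ)) else 0))]
  by_cases hcr : (c : ℕ) ≤ (r : ℕ)
  · have h1 : ∀ k ∈ Finset.range m,
        (if k ≤ (r:ℕ) then a ((r:ℕ) - k) else 0) * (if (c:ℕ) ≤ k then invCol a (k - (c:ℕ)) else 0)
        = if k ∈ Finset.Icc (c:ℕ) (r:ℕ) then a ((r:ℕ) - k) * invCol a (k - (c:ℕ)) else 0 := by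
      intro k _
      by_cases h2 : k ≤ (r:ℕ) <;> by_cases h3 : (c:ℕ) ≤ k <;>
        simp [h2, h3, Finset.mem_Icc]
    rw [Finset.sum_congr rfl h1, Finset.sum_ite_mem,
      Finset.inter_eq_right.mpr (fun k hk => Finset.mem_range.mpr (lt_of_le_of_lt (Finset.mem_Icc.mp hk).2 r.isLt))]
    have hre : ∑ k ∈ Finset.Icc (c:ℕ) (r:ℕ), a ((r:ℕ) - k) * invCol a (k - (c:ℕ))
        = ∑ d ∈ Finset.range ((r:ℕ) - (c:ℕ) + 1), a ((r:ℕ) - (c:ℕ) - d) * invCol a d := by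
      rw [show Finset.Icc (c:ℕ) (r:ℕ) = Finset.Ico (c:ℕ) ((r:ℕ)+1) by rw [Finset.Ico_add_one_right_eq_Icc],
        Finset.sum_Ico_eq_sum_range,
        show (r:ℕ) + 1 - (c:ℕ) = (r:ℕ) - (c:ℕ) + 1 by omega]
      refine Finset.sum_congr rfl fun d hd => ?_
      have hd' := Finset.mem_range.mp hd
      congr 1
      · congr 1; omega
      · congr 1; omega
    rw [hre, invCol_conv a ha]
    have : ((r:ℕ) - (c:ℕ) = 0) ↔ (r = c) := by
      rw [Fin.ext_iff]; omega
    by_cases h : r = c <;> simp [h, this]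
  · have : ∀ k ∈ Finset.range m,
        (if k ≤ (r:ℕ) then a ((r:ℕ) - k) else 0) * (if (c:ℕ) ≤ k then invCol a (k - (c:ℕ)) else 0) = 0 := by
      intro k _
      by_cases h2 : k ≤ (r:ℕ) <;> by_cases h3 : (c:ℕ) ≤ k <;> simp [h2, h3] <;> omega
    rw [Finset.sum_congr rfl this, Finset.sum_const_zero]
    have : r ≠ c := fun h => hcr (by rw [h])
    simp [this]

end ToeplitzInverse

section Combinatorics

variable {m : ℕ}

theorem orderEmbOfFin_le_iff (S : Finset (Fin m)) {n : ℕ} (h : S.card = n)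
    (k : Fin n) (x : Fin m) :
    S.orderEmbOfFin h k ≤ x ↔ (k : ℕ) < (S.filter (· ≤ x)).card := by
  constructor
  · intro hle
    have himg : (Finset.Iic k).image (S.orderEmbOfFin h) ⊆ S.filter (· ≤ x) := by
      intro y hy
      rcases Finset.mem_image.mp hy with ⟨l, hl, rfl⟩
      rw [Finset.mem_filter]
      exact ⟨Finset.orderEmbOfFin_mem S h l,
        le_trans ((S.orderEmbOfFin h).monotone (Finset.mem_Iic.mp hl)) hle⟩
    have hcard : (Finset.Iic k).card = (k : ℕ) + 1 := by simp
    calc (k:ℕ) < (k:ℕ) + 1 := Nat.lt_succ_self _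
      _ = ((Finset.Iic k).image (S.orderEmbOfFin h)).card := by
          rw [Finset.card_image_of_injective _ (S.orderEmbOfFin h).injective, hcard]
      _ ≤ _ := Finset.card_le_card himg
  · intro hlt
    by_contra hx
    push_neg at hx
    have hsub : S.filter (· ≤ x) ⊆ (Finset.Iio k).image (S.orderEmbOfFin h) := by
      intro y hy
      rw [Finset.mem_filter] at hy
      have : y ∈ Set.range (S.orderEmbOfFin h) := by
        rw [Finset.range_orderEmbOfFin]; exact hy.1
      rcases this with ⟨l, rfl⟩
      refine Finset.mem_image.mpr ⟨l, Finset.mem_Iio.mpr ?_, rfl⟩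
      by_contra hlk
      push_neg at hlk
      exact absurd (le_trans ((S.orderEmbOfFin h).monotone hlk) hy.2) (not_le.mpr hx)
    have := Finset.card_le_card hsub
    rw [Finset.card_image_of_injective _ (S.orderEmbOfFin h).injective] at this
    have hio : (Finset.Iio k).card = (k : ℕ) := by simp
    omega

theorem compl_orderEmb_le {s : ℕ} (i j : Fin s → Fin m)
    (hi : StrictMono i) (hj : StrictMono j) (hji : ∀ k, j k ≤ i k)
    {t : ℕ} (hI : ((Finset.univ.image i)ᶜ : Finset (Fin m)).card = t)
    (hJ : ((Finset.univ.image j)ᶜ : Finset (Fin m)).card = t) (k : Fin t) :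
    ((Finset.univ.image i)ᶜ : Finset (Fin m)).orderEmbOfFin hI k ≤
      ((Finset.univ.image j)ᶜ : Finset (Fin m)).orderEmbOfFin hJ k := by
  set I := (Finset.univ.image i : Finset (Fin m))
  set J := (Finset.univ.image j : Finset (Fin m))
  have hcount : ∀ x : Fin m, (Jᶜ.filter (· ≤ x)).card ≤ (Iᶜ.filter (· ≤ x)).card := by
    intro x
    have hIf : (I.filter (· ≤ x)).card = (Finset.univ.filter (fun k => i k ≤ x)).card := by
      rw [Finset.filter_image, Finset.card_image_of_injective _ hi.injective]
    have hJf : (J.filter (· ≤ x)).card = (Finset.univ.filter (fun k => j k ≤ x)).card := by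
      rw [Finset.filter_image, Finset.card_image_of_injective _ hj.injective]
    have hIJ : (I.filter (· ≤ x)).card ≤ (J.filter (· ≤ x)).card := by
      rw [hIf, hJf]
      exact Finset.card_le_card (fun k hk => by
        simp only [Finset.mem_filter, Finset.mem_univ, true_and] at hk ⊢
        exact le_trans (hji k) hk)
    have hIc : (Iᶜ.filter (· ≤ x)).card = (Finset.Iic x).card - (I.filter (· ≤ x)).card := by
      have : Iᶜ.filter (· ≤ x) = Finset.Iic x \ (I.filter (· ≤ x)) := by
        ext y
        simp only [Finset.mem_filter, Finset.mem_compl, Finset.mem_sdiff, Finset.mem_Iic]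
        tauto
      rw [this, Finset.card_sdiff_of_subset (by intro y hy; exact Finset.mem_Iic.mpr (Finset.mem_filter.mp hy).2)]
    have hJc : (Jᶜ.filter (· ≤ x)).card = (Finset.Iic x).card - (J.filter (· ≤ x)).card := by
      have : Jᶜ.filter (· ≤ x) = Finset.Iic x \ (J.filter (· ≤ x)) := by
        ext y
        simp only [Finset.mem_filter, Finset.mem_compl, Finset.mem_sdiff, Finset.mem_Iic]
        tauto
      rw [this, Finset.card_sdiff_of_subset (by intro y hy; exact Finset.mem_Iic.mpr (Finset.mem_filter.mp hy).2)]
    have hle1 : (I.filter (· ≤ x)).card ≤ (Finset.Iic x).card :=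
      Finset.card_le_card (fun y hy => Finset.mem_Iic.mpr (Finset.mem_filter.mp hy).2)
    omega
  set y := Jᶜ.orderEmbOfFin hJ k
  have h1 : (k : ℕ) < (Jᶜ.filter (· ≤ y)).card :=
    (orderEmbOfFin_le_iff Jᶜ hJ k y).mp le_rfl
  exact (orderEmbOfFin_le_iff Iᶜ hI k y).mpr (lt_of_lt_of_le h1 (hcount y))

end Combinatorics

section Jacobi

variable {F : Type*} [Field F]
open Matrix

theorem jacobi_block {s t : Type*} [Fintype s] [Fintype t] [DecidableEq s] [DecidableEq t]
    (M N : Matrix (s ⊕ t) (s ⊕ t) F) (h : M * N = 1) :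
    M.det * (N.toBlocks₁₁).det = (M.toBlocks₂₂).det := by
  have hM : M = fromBlocks M.toBlocks₁₁ M.toBlocks₁₂ M.toBlocks₂₁ M.toBlocks₂₂ :=
    (fromBlocks_toBlocks M).symm
  have hN : N = fromBlocks N.toBlocks₁₁ N.toBlocks₁₂ N.toBlocks₂₁ N.toBlocks₂₂ :=
    (fromBlocks_toBlocks N).symm
  set M₁₁ := M.toBlocks₁₁; set M₁₂ := M.toBlocks₁₂; set M₂₁ := M.toBlocks₂₁; set M₂₂ := M.toBlocks₂₂
  set N₁₁ := N.toBlocks₁₁; set N₂₁ := N.toBlocks₂₁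
  have hprod : M * (fromBlocks N₁₁ 0 N₂₁ 1) = fromBlocks 1 M₁₂ 0 M₂₂ := by
    rw [hM, fromBlocks_multiply]
    have h' : fromBlocks (M₁₁*N₁₁ + M₁₂*N₂₁) (M₁₁*N.toBlocks₁₂ + M₁₂*N.toBlocks₂₂)
        (M₂₁*N₁₁ + M₂₂*N₂₁) (M₂₁*N.toBlocks₁₂ + M₂₂*N.toBlocks₂₂)
        = fromBlocks 1 0 0 1 := by
      rw [← fromBlocks_multiply, ← hM, ← hN, h, fromBlocks_one]
    have h11 : M₁₁*N₁₁ + M₁₂*N₂₁ = 1 := by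
      have := congrArg toBlocks₁₁ h'
      simp only [toBlocks_fromBlocks₁₁] at this; exact this
    have h21 : M₂₁*N₁₁ + M₂₂*N₂₁ = 0 := by
      have := congrArg toBlocks₂₁ h'
      simp only [toBlocks_fromBlocks₂₁] at this; exact this
    simp [h11, h21]
  have hd := congrArg det hprod
  rw [det_mul, det_fromBlocks_zero₁₂, det_fromBlocks_zero₂₁, det_one] at hd
  simpa using hd

theorem inv_minor_ne_zero {m : ℕ} (A B : Matrix (Fin m) (Fin m) F) (hAB : A * B = 1)
    (hA : ∀ (s : ℕ) (i j : Fin s → Fin m), StrictMono i → StrictMono j →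
      (∀ ν : Fin s, (j ν : ℕ) ≤ (i ν : ℕ)) → (A.submatrix i j).det ≠ 0)
    {s : ℕ} (i j : Fin s → Fin m) (hi : StrictMono i) (hj : StrictMono j)
    (hji : ∀ k : Fin s, (j k : ℕ) ≤ (i k : ℕ)) :
    (B.submatrix i j).det ≠ 0 := by
  classical
  set I : Finset (Fin m) := Finset.univ.image i with hIdef
  set J : Finset (Fin m) := Finset.univ.image j with hJdef
  have hs : s ≤ m := by
    have := Fintype.card_le_of_injective i hi.injective
    simpa using this
  have hIcard : I.card = s := by
    rw [hIdef, Finset.card_image_of_injective _ hi.injective, Finset.card_univ, Fintype.card_fin]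
  have hJcard : J.card = s := by
    rw [hJdef, Finset.card_image_of_injective _ hj.injective, Finset.card_univ, Fintype.card_fin]
  have hIc : (Iᶜ : Finset (Fin m)).card = m - s := by
    rw [Finset.card_compl, hIcard, Fintype.card_fin]
  have hJc : (Jᶜ : Finset (Fin m)).card = m - s := by
    rw [Finset.card_compl, hJcard, Fintype.card_fin]
  set ic : Fin (m - s) → Fin m := fun k => (Iᶜ : Finset (Fin m)).orderEmbOfFin hIc k with hicdef
  set jc : Fin (m - s) → Fin m := fun k => (Jᶜ : Finset (Fin m)).orderEmbOfFin hJc k with hjcdef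
  have hic : StrictMono ic := (Iᶜ.orderEmbOfFin hIc).strictMono
  have hjc : StrictMono jc := (Jᶜ.orderEmbOfFin hJc).strictMono
  have hicjc : ∀ k, ic k ≤ jc k := fun k => compl_orderEmb_le i j hi hj
    (fun k => hji k) hIc hJc k
  have hbij : ∀ (u : Fin s → Fin m) (uc : Fin (m-s) → Fin m), Function.Injective u →
      Function.Injective uc → (∀ a, u a ∈ (Finset.univ.image u : Finset (Fin m))) →
      (∀ b, uc b ∈ ((Finset.univ.image u)ᶜ : Finset (Fin m))) →
      Function.Bijective (Sum.elim u uc) := by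
    intro u uc hu huc hmem hmemc
    rw [Fintype.bijective_iff_injective_and_card]
    constructor
    · intro x y hxy
      cases x with
      | inl a => cases y with
        | inl b => exact congrArg Sum.inl (hu hxy)
        | inr b =>
          exfalso
          have hxy' : u a = uc b := hxy
          have h1 := hmem a
          rw [hxy'] at h1
          exact Finset.mem_compl.mp (hmemc b) h1
      | inr a => cases y with
        | inl b =>
          exfalso
          have hxy' : uc a = u b := hxy
          have h1 := hmem b
          rw [← hxy'] at h1
          exact Finset.mem_compl.mp (hmemc a) h1
        | inr b => exact congrArg Sum.inr (huc hxy)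
    · simp [Fintype.card_sum]; omega
  have heb : Function.Bijective (Sum.elim j jc) := by
    refine hbij j jc hj.injective hjc.injective
      (fun a => Finset.mem_image.mpr ⟨a, Finset.mem_univ _, rfl⟩) ?_
    intro b; exact Finset.orderEmbOfFin_mem _ hJc b
  have hfb : Function.Bijective (Sum.elim i ic) := by
    refine hbij i ic hi.injective hic.injective
      (fun a => Finset.mem_image.mpr ⟨a, Finset.mem_univ _, rfl⟩) ?_
    intro b; exact Finset.orderEmbOfFin_mem _ hIc b
  set eE : Fin s ⊕ Fin (m - s) ≃ Fin m := Equiv.ofBijective _ heb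
  set fE : Fin s ⊕ Fin (m - s) ≃ Fin m := Equiv.ofBijective _ hfb
  have hMN : (A.submatrix eE fE) * (B.submatrix fE eE) = 1 := by
    rw [Matrix.submatrix_mul_equiv, hAB, Matrix.submatrix_one_equiv]
  have hjac := jacobi_block (A.submatrix eE fE) (B.submatrix fE eE) hMN
  have h11 : (B.submatrix (⇑fE) (⇑eE)).toBlocks₁₁ = B.submatrix i j := rfl
  have h22 : (A.submatrix (⇑eE) (⇑fE)).toBlocks₂₂ = A.submatrix jc ic := rfl
  rw [h11, h22] at hjac
  intro hzero
  rw [hzero, mul_zero] at hjac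
  exact hA (m - s) jc ic hjc hic (fun k => Fin.le_iff_val_le_val.mp (hicjc k)) hjac.symm

end Jacobi

section Main

variable {F : Type*} [Field F] {m : ℕ}

theorem strictMono_fin_one {α : Type*} [Preorder α] (f : Fin 1 → α) : StrictMono f :=
  fun a b hab => absurd (Subsingleton.elim a b) (ne_of_lt hab)

theorem sr_entry_ne_zero {A : Matrix (Fin m) (Fin m) F} (hA : Superregular A)
    (r c : Fin m) (hcr : (c : ℕ) ≤ (r : ℕ)) : A r c ≠ 0 := by
  have := hA.2 1 (fun _ => r) (fun _ => c) (strictMono_fin_one _) (strictMono_fin_one _)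
    (fun _ => hcr)
  rwa [Matrix.det_fin_one] at this

theorem sr_toep {A : Matrix (Fin m) (Fin m) F} (hA : Superregular A) :
    ∃ a : ℕ → F, A = toepMat m a := by
  obtain ⟨a, ha⟩ := hA.1
  exact ⟨a, by ext r c; rw [ha r c]; rfl⟩

theorem sr_a0_ne_zero (hm : 0 < m) {A : Matrix (Fin m) (Fin m) F} (hA : Superregular A)
    {a : ℕ → F} (haA : A = toepMat m a) : a 0 ≠ 0 := by
  have h := sr_entry_ne_zero hA ⟨0, hm⟩ ⟨0, hm⟩ le_rfl
  rw [haA] at h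
  simpa [toepMat] using h

theorem sr_inv_eq (hm : 0 < m) {A : Matrix (Fin m) (Fin m) F} (hA : Superregular A)
    {a : ℕ → F} (haA : A = toepMat m a) : A⁻¹ = toepMat m (invCol a) := by
  apply Matrix.inv_eq_right_inv
  rw [haA]
  exact toep_mul_invCol m a (sr_a0_ne_zero hm hA haA)

theorem sr_neg_inv (hm : 0 < m) {A : Matrix (Fin m) (Fin m) F} (hA : Superregular A) :
    Superregular (-A⁻¹) := by
  obtain ⟨a, haA⟩ := sr_toep hA
  have ha0 := sr_a0_ne_zero hm hA haA
  have hinv := sr_inv_eq hm hA haA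
  have hAB : A * toepMat m (invCol a) = 1 := by
    rw [haA]; exact toep_mul_invCol m a ha0
  constructor
  · refine ⟨fun n => -(invCol a n), fun r c => ?_⟩
    rw [hinv]
    simp only [Matrix.neg_apply, toepMat, Matrix.of_apply]
    split <;> simp
  · intro s i j hi hj hji
    have hB := inv_minor_ne_zero A (toepMat m (invCol a)) hAB hA.2 i j hi hj hji
    have hneg : (-A⁻¹).submatrix i j = -(A⁻¹.submatrix i j) := rfl
    rw [hneg, Matrix.det_neg, hinv]
    exact mul_ne_zero (pow_ne_zero _ (neg_ne_zero.mpr one_ne_zero)) hB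

theorem sr_invol (hm : 0 < m) {A : Matrix (Fin m) (Fin m) F} (hA : Superregular A) :
    -(-A⁻¹)⁻¹ = A := by
  obtain ⟨a, haA⟩ := sr_toep hA
  have ha0 := sr_a0_ne_zero hm hA haA
  have hinv := sr_inv_eq hm hA haA
  have hAB : A * toepMat m (invCol a) = 1 := by
    rw [haA]; exact toep_mul_invCol m a ha0
  have hBA : toepMat m (invCol a) * A = 1 := mul_eq_one_comm.mp hAB
  have : (-A⁻¹)⁻¹ = -A := by
    apply Matrix.inv_eq_right_inv
    rw [hinv, neg_mul_neg]
    exact hBA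
  rw [this, neg_neg]

theorem sr_no_fixed {γ : ℕ} (hγ : 2 ≤ γ) {A : Matrix (Fin (γ+1)) (Fin (γ+1)) F}
    (hA : Superregular A) : -A⁻¹ ≠ A := by
  intro hfix
  obtain ⟨a, haA⟩ := sr_toep hA
  have hm : 0 < γ + 1 := Nat.succ_pos _
  have ha0 := sr_a0_ne_zero hm hA haA
  have hinv := sr_inv_eq hm hA haA
  rw [hinv] at hfix
  -- entries at (n, 0) for n = 0, 1, 2
  have hent : ∀ n : ℕ, (hn : n < γ + 1) → a n = -(invCol a n) := by
    intro n hn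
    have := congrArg (fun M => M ⟨n, hn⟩ ⟨0, hm⟩) hfix
    rw [haA] at this
    simp only [Matrix.neg_apply, toepMat, Matrix.of_apply] at this
    simpa using this.symm
  have h0 : a 0 = -(invCol a 0) := hent 0 (by omega)
  have h1 : a 1 = -(invCol a 1) := hent 1 (by omega)
  have h2 : a 2 = -(invCol a 2) := hent 2 (by omega)
  have ha1 : a 1 ≠ 0 := by
    have h := sr_entry_ne_zero hA ⟨1, by omega⟩ ⟨0, hm⟩ (by simp)
    rw [haA] at h
    simpa [toepMat] using h
  have hc1 := invCol_conv a ha0 1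
  have hc2 := invCol_conv a ha0 2
  rw [Finset.sum_range_succ, Finset.sum_range_succ, Finset.sum_range_zero] at hc1
  rw [Finset.sum_range_succ, Finset.sum_range_succ, Finset.sum_range_succ,
    Finset.sum_range_zero] at hc2
  norm_num at hc1 hc2
  -- hc1 : a 1 * invCol a 0 + a 0 * invCol a 1 = 0
  -- hc2 : a 2 * invCol a 0 + a 1 * invCol a 1 + a 0 * invCol a 2 = 0
  have e0 : invCol a 0 = -(a 0) := by linear_combination h0
  have e1 : invCol a 1 = -(a 1) := by linear_combination h1
  have e2 : invCol a 2 = -(a 2) := by linear_combination h2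
  rw [e0, e1] at hc1
  rw [e0, e1, e2] at hc2
  by_cases h2F : (2 : F) = 0
  · have : a 1 * a 1 = 0 := by linear_combination -hc2 - (a 0 * a 2) * h2F
    exact ha1 (by simpa [mul_self_eq_zero] using this)
  · have h20 : (2 : F) * (a 0 * a 1) = 0 := by linear_combination -hc1
    rcases mul_eq_zero.mp h20 with h | h
    · exact h2F h
    · rcases mul_eq_zero.mp h with h | h
      · exact ha0 h
      · exact ha1 h

end Main

/-- For `γ ≥ 2`, the number of `(γ+1) × (γ+1)` superregular matrices over a
finite field is even. -/
theorem superregular_card_even {F : Type*} [Field F] [Fintype F] {γ : ℕ}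
    (hγ : 2 ≤ γ) :
    Even (Nat.card {A : Matrix (Fin (γ + 1)) (Fin (γ + 1)) F // Superregular A}) := by
  classical
  have hm : 0 < γ + 1 := Nat.succ_pos _
  rw [Nat.card_eq_fintype_card]
  exact even_card_of_fpf_involution
    (fun x : {A : Matrix (Fin (γ + 1)) (Fin (γ + 1)) F // Superregular A} =>
      ⟨-(x.1)⁻¹, sr_neg_inv hm x.2⟩)
    (fun x => Subtype.ext (sr_invol hm x.2))
    (fun x => fun h => sr_no_fixed hγ x.2 (congrArg Subtype.val h))
end

section
/- Let F be a finite field, let α ∈ F be nonzero, and let A be a (γ+1)×(γ+1) superregular matrix over F with first column (a_0, a_1, …, a_γ). Then the (γ+1)×(γ+1) lower triangular Toeplitz matrix with first column (a_0, α·a_1, α²·a_2, …, α^γ·a_γ) is also superregular. Moreover, this matrix equals D·A·D⁻¹, where D is the diagonal matrix with diagonal entries 1, α, α², …, α^γ. -/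
/-- Scaling the first column `(a₀, a₁, …, a_γ)` of a superregular matrix to
`(a₀, α·a₁, α²·a₂, …, α^γ·a_γ)` (for `α ≠ 0`) yields a superregular matrix,
which moreover equals `D · A · D⁻¹` for `D = diag(1, α, α², …, α^γ)`. -/
theorem superregular_scale {F : Type*} [Field F] [Fintype F] {γ : ℕ}
    (α : F) (hα : α ≠ 0)
    (A : Matrix (Fin (γ + 1)) (Fin (γ + 1)) F) (hA : Superregular A)
    (B : Matrix (Fin (γ + 1)) (Fin (γ + 1)) F)
    (hB : ∀ r c : Fin (γ + 1), B r c =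
      if (c : ℕ) ≤ (r : ℕ) then
        α ^ ((r : ℕ) - (c : ℕ)) *
          A ⟨(r : ℕ) - (c : ℕ), lt_of_le_of_lt (Nat.sub_le _ _) r.isLt⟩ 0
      else 0) :
    Superregular B ∧
      B = Matrix.diagonal (fun i : Fin (γ + 1) => α ^ (i : ℕ)) * A *
            (Matrix.diagonal (fun i : Fin (γ + 1) => α ^ (i : ℕ)))⁻¹ := by
  obtain ⟨⟨a, ha⟩, hdet⟩ := hA
  have ha0 : ∀ (k : ℕ) (hk : k < γ + 1), A ⟨k, hk⟩ 0 = a k := by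
    intro k hk
    simpa using ha ⟨k, hk⟩ 0
  have hBA : ∀ r c : Fin (γ + 1),
      B r c = α ^ (r : ℕ) * A r c * (α ^ (c : ℕ))⁻¹ := by
    intro r c
    rw [hB]
    by_cases h : (c : ℕ) ≤ (r : ℕ)
    · rw [if_pos h, ha0, ha r c, if_pos h, pow_sub₀ α hα h]
      ring
    · rw [if_neg h, ha r c, if_neg h]
      ring
  have hsub : ∀ (s : ℕ) (i j : Fin s → Fin (γ + 1)),
      B.submatrix i j =
        Matrix.diagonal (fun p => α ^ ((i p : ℕ))) * (A.submatrix i j) *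
          Matrix.diagonal (fun q => (α ^ ((j q : ℕ)))⁻¹) := by
    intro s i j
    ext p q
    rw [Matrix.mul_diagonal, Matrix.diagonal_mul, Matrix.submatrix_apply,
      Matrix.submatrix_apply, hBA]
  constructor
  · constructor
    · refine ⟨fun k => α ^ k * a k, fun r c => ?_⟩
      rw [hB]
      by_cases h : (c : ℕ) ≤ (r : ℕ) <;> simp [h, ha0]
    · intro s i j hi hj hij
      rw [hsub, Matrix.det_mul, Matrix.det_mul, Matrix.det_diagonal,
        Matrix.det_diagonal]
      refine mul_ne_zero (mul_ne_zero ?_ (hdet s i j hi hj hij)) ?_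
      · exact Finset.prod_ne_zero_iff.2 fun p _ => pow_ne_zero _ hα
      · exact Finset.prod_ne_zero_iff.2 fun q _ => inv_ne_zero (pow_ne_zero _ hα)
  · set D := Matrix.diagonal (fun i : Fin (γ + 1) => α ^ (i : ℕ)) with hDdef
    have hdetD : IsUnit D.det := by
      rw [hDdef, Matrix.det_diagonal]
      exact (Finset.prod_ne_zero_iff.2 fun p _ => pow_ne_zero _ hα).isUnit
    haveI : Invertible D := D.invertibleOfIsUnitDet hdetD
    symm
    rw [Matrix.mul_inv_eq_iff_eq_mul_of_invertible]
    ext r c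
    rw [Matrix.mul_diagonal, Matrix.diagonal_mul, hBA, mul_assoc,
      inv_mul_cancel₀ (pow_ne_zero _ hα), mul_one]
end

section
/- Let γ be a positive integer. Then, as rational numbers, ∏_{1 ≤ i ≤ j ≤ γ} (2 + i + j)/(i + j) = (1/(γ+2)) · binom(2(γ+1), γ+1). -/
/-!
The inner product telescopes: `∏_{i ≤ j} (i + j + 2)/(i + j) = (2j + 1)(2j + 2)/((j + 1)(j + 2))`,
which is exactly the ratio `C_{j+1}/C_j` of consecutive Catalan numbers. The outer product then
telescopes to `C_{γ+1}/C_1 = C_{γ+1}`, and `(γ + 2) C_{γ+1} = binom(2(γ+1), γ+1)`.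
-/

open Finset

theorem Finset.prod_Ico_div_of_ne_zero {M : Type*} [CommGroupWithZero M] {m n : ℕ} (hmn : m ≤ n)
    (f : ℕ → M) (hf : ∀ i, f i ≠ 0) :
    ∏ i ∈ Ico m n, f (i + 1) / f i = f n / f m := by
  simpa using congrArg Units.val (prod_Ico_div (fun i => Units.mk0 (f i) (hf i)) hmn)

theorem prod_Icc_two_add_div_add (j m : ℕ) :
    ∏ i ∈ Icc 1 m, ((2 + (i : ℚ) + j) / ((i : ℚ) + j)) =
      ((m + j + 1) * (m + j + 2)) / ((j + 1) * (j + 2)) := by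
  induction m with
  | zero => simp [div_self (by positivity : ((j : ℚ) + 1) * (j + 2) ≠ 0)]
  | succ m ih =>
    rw [prod_Icc_succ_top (by omega), ih]
    have : ((m : ℚ) + j + 1) ≠ 0 := by positivity
    push_cast
    field_simp
    ring

theorem catalan_pos (n : ℕ) : 0 < catalan n :=
  Nat.pos_of_mul_pos_left ((succ_mul_catalan_eq_centralBinom n).symm ▸ n.centralBinom_pos)

theorem succ_succ_mul_catalan_succ (n : ℕ) :
    (n + 2) * catalan (n + 1) = 2 * (2 * n + 1) * catalan n := by
  refine Nat.eq_of_mul_eq_mul_left n.succ_pos ?_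
  calc (n + 1) * ((n + 2) * catalan (n + 1))
      = (n + 1) * (n + 1).centralBinom := by rw [← succ_mul_catalan_eq_centralBinom]
    _ = 2 * (2 * n + 1) * n.centralBinom := Nat.succ_mul_centralBinom_succ n
    _ = (n + 1) * (2 * (2 * n + 1) * catalan n) := by
      rw [← succ_mul_catalan_eq_centralBinom]; ring

theorem catalan_succ_div_catalan (n : ℕ) :
    (catalan (n + 1) : ℚ) / catalan n = ((n + n + 1) * (n + n + 2)) / ((n + 1) * (n + 2)) := by
  have hrec : ((n : ℚ) + 2) * catalan (n + 1) = 2 * (2 * n + 1) * catalan n := by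
    exact_mod_cast succ_succ_mul_catalan_succ n
  have : (catalan n : ℚ) ≠ 0 := by exact_mod_cast (catalan_pos n).ne'
  field_simp
  linear_combination ((n : ℚ) + 1) * hrec

theorem catalan_product_identity_general (γ : ℕ) :
    ∏ j ∈ Finset.Icc 1 γ, ∏ i ∈ Finset.Icc 1 j,
        ((2 + (i : ℚ) + (j : ℚ)) / ((i : ℚ) + (j : ℚ))) =
      (1 / ((γ : ℚ) + 2)) * (Nat.choose (2 * (γ + 1)) (γ + 1) : ℚ) := by
  have hcentral : ((γ : ℚ) + 2) * catalan (γ + 1) = Nat.choose (2 * (γ + 1)) (γ + 1) := by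
    exact_mod_cast succ_mul_catalan_eq_centralBinom (γ + 1)
  calc ∏ j ∈ Icc 1 γ, ∏ i ∈ Icc 1 j, ((2 + (i : ℚ) + j) / ((i : ℚ) + j))
      = ∏ j ∈ Icc 1 γ, (catalan (j + 1) : ℚ) / catalan j :=
        prod_congr rfl fun j _ => by rw [prod_Icc_two_add_div_add, catalan_succ_div_catalan]
    _ = catalan (γ + 1) := by
        have hne (i : ℕ) : (catalan i : ℚ) ≠ 0 := by exact_mod_cast (catalan_pos i).ne'
        rw [← Ico_add_one_right_eq_Icc, prod_Ico_div_of_ne_zero (by omega) _ hne]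
        simp [catalan_one]
    _ = (1 / ((γ : ℚ) + 2)) * (Nat.choose (2 * (γ + 1)) (γ + 1) : ℚ) := by
        rw [← hcentral]; field_simp

/-- The Catalan-number product identity:
`∏_{1 ≤ i ≤ j ≤ γ} (2+i+j)/(i+j) = (1/(γ+2))·C(2(γ+1), γ+1)`. -/
theorem catalan_product_identity (γ : ℕ) (hγ : 1 ≤ γ) :
    ∏ j ∈ Finset.Icc 1 γ, ∏ i ∈ Finset.Icc 1 j,
        ((2 + (i : ℚ) + (j : ℚ)) / ((i : ℚ) + (j : ℚ))) =
      (1 / ((γ : ℚ) + 2)) * (Nat.choose (2 * (γ + 1)) (γ + 1) : ℚ) :=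
  catalan_product_identity_general γ
end

section
/- Let γ ≥ 1 and let B be the γ×γ real matrix with entries B_{r,c} = binom(γ−1, r−c) for r ≥ c and B_{r,c} = 0 for r < c. Then every proper submatrix of B has a strictly positive determinant; in particular, B is superregular over ℝ. -/
open Matrix Finset

/-- The `s × s` minor matrix of the infinite binomial Toeplitz array. -/
def BM (n : ℕ) {s : ℕ} (i j : Fin s → ℕ) : Matrix (Fin s) (Fin s) ℝ :=
  Matrix.of fun ν μ => if j μ ≤ i ν then (Nat.choose n (i ν - j μ) : ℝ) else 0

lemma det_zero_block {s : ℕ} (A : Matrix (Fin s) (Fin s) ℝ) (t : Fin s)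
    (h : ∀ ν μ, t ≤ ν → μ ≤ t → A ν μ = 0) : A.det = 0 := by
  rw [Matrix.det_apply]
  apply Finset.sum_eq_zero
  intro σ _
  suffices h' : ∃ μ, μ ≤ t ∧ t ≤ σ μ by
    obtain ⟨μ, h1, h2⟩ := h'
    rw [Finset.prod_eq_zero (f := fun i => A (σ i) i) (Finset.mem_univ μ) (h _ _ h2 h1), smul_zero]
  by_contra hc
  push_neg at hc
  have hcard : (Finset.Iic t).card ≤ (Finset.Iio t).card := by
    apply Finset.card_le_card_of_injOn σ
    · intro μ hμ
      exact Finset.mem_Iio.mpr (hc μ (Finset.mem_Iic.mp hμ))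
    · exact fun a _ b _ hab => σ.injective hab
  rw [Fin.card_Iic, Fin.card_Iio] at hcard
  omega

lemma det_zero_block' {s : ℕ} (A : Matrix (Fin s) (Fin s) ℝ) (t : Fin s)
    (h : ∀ ν μ, ν ≤ t → t ≤ μ → A ν μ = 0) : A.det = 0 := by
  rw [← Matrix.det_transpose]
  exact det_zero_block _ t (fun ν μ hν hμ => h μ ν hμ hν)

lemma pascal_entry (n k m : ℕ) :
    (if k ≤ m then (((n+1).choose (m - k)) : ℝ) else 0)
      = (if k ≤ m then ((n.choose (m - k)) : ℝ) else 0)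
        + (if k + 1 ≤ m then ((n.choose (m - (k+1))) : ℝ) else 0) := by
  by_cases h1 : k + 1 ≤ m
  · have h0 : k ≤ m := by omega
    have hd : m - k = (m - (k+1)) + 1 := by omega
    rw [if_pos h0, if_pos h0, if_pos h1, hd, Nat.choose_succ_succ]
    push_cast; ring
  · by_cases h0 : k ≤ m
    · have hm : m = k := by omega
      simp [hm]
    · simp [h0, h1]

lemma BM_det_succ (n : ℕ) {s : ℕ} (i j : Fin s → ℕ) :
    (BM (n+1) i j).det
      = ∑ f : Fin s → Fin 2, (BM n i (fun μ => j μ + (f μ : ℕ))).det := by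
  have h1 : ∀ (m : ℕ) (k : Fin s → ℕ), (BM m i k).det
      = Matrix.detRowAlternating
          (fun μ ν => if k μ ≤ i ν then ((m.choose (i ν - k μ)) : ℝ) else 0) := by
    intro m k
    rw [← Matrix.det_transpose]
    rfl
  rw [h1 (n+1) j]
  have h2 : (fun μ ν => if j μ ≤ i ν then (((n+1).choose (i ν - j μ)) : ℝ) else 0)
      = fun μ => ∑ t : Fin 2,
          (fun ν => if j μ + (t : ℕ) ≤ i ν
            then ((n.choose (i ν - (j μ + (t : ℕ)))) : ℝ) else 0) := by
    funext μ
    rw [Fin.sum_univ_two]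
    funext ν
    simpa using pascal_entry n (j μ) (i ν)
  rw [h2]
  rw [show (Matrix.detRowAlternating
      (fun μ => ∑ t : Fin 2, (fun ν => if j μ + (t : ℕ) ≤ i ν
          then ((n.choose (i ν - (j μ + (t : ℕ)))) : ℝ) else 0)))
    = (Matrix.detRowAlternating (R := ℝ) (n := Fin s)).toMultilinearMap
        (fun μ => ∑ t : Fin 2, (fun ν => if j μ + (t : ℕ) ≤ i ν
          then ((n.choose (i ν - (j μ + (t : ℕ)))) : ℝ) else 0)) from rfl]
  rw [MultilinearMap.map_sum]
  exact Finset.sum_congr rfl fun r _ => (h1 n (fun μ => j μ + (r μ : ℕ))).symm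

lemma BM_det_zero_of_gt (n : ℕ) {s : ℕ} (i j : Fin s → ℕ)
    (hi : Monotone i) (hj : Monotone j) (ν₀ : Fin s) (h : j ν₀ + n < i ν₀) :
    (BM n i j).det = 0 := by
  apply det_zero_block _ ν₀
  intro ν μ hν hμ
  have hiν : i ν₀ ≤ i ν := hi hν
  have hjμ : j μ ≤ j ν₀ := hj hμ
  simp only [BM, Matrix.of_apply]
  split
  · rw [Nat.choose_eq_zero_of_lt (by omega)]
    norm_num
  · rfl

lemma BM_det_zero_of_lt (n : ℕ) {s : ℕ} (i j : Fin s → ℕ)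
    (hi : Monotone i) (hj : Monotone j) (ν₀ : Fin s) (h : i ν₀ < j ν₀) :
    (BM n i j).det = 0 := by
  apply det_zero_block' _ ν₀
  intro ν μ hν hμ
  have hiν : i ν ≤ i ν₀ := hi hν
  have hjμ : j ν₀ ≤ j μ := hj hμ
  simp only [BM, Matrix.of_apply]
  rw [if_neg (by omega)]

lemma mono_add_bit {s : ℕ} (j : Fin s → ℕ) (hj : StrictMono j) (f : Fin s → Fin 2) :
    Monotone (fun μ => j μ + (f μ : ℕ)) := by
  intro a b hab
  rcases eq_or_lt_of_le hab with rfl | h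
  · exact le_refl _
  · have h1 : j a < j b := hj h
    have h2 : (f a : ℕ) ≤ 1 := Fin.is_le _
    simp only
    omega

theorem BM_det_pos (n : ℕ) : ∀ (s : ℕ) (i j : Fin s → ℕ), StrictMono i → StrictMono j →
    (∀ ν, j ν ≤ i ν) → (∀ ν, i ν ≤ j ν + n) → 0 < (BM n i j).det := by
  induction n with
  | zero =>
    intro s i j hi hj h1 h2
    have he : ∀ ν, j ν = i ν := fun ν => le_antisymm (h1 ν) (by simpa using h2 ν)
    have hone : BM 0 i j = 1 := by
      ext ν μ
      simp only [BM, Matrix.of_apply, Matrix.one_apply, he]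
      rcases eq_or_ne ν μ with rfl | hne
      · simp
      · have hne' : i ν ≠ i μ := fun hc => hne (hi.injective hc)
        by_cases hle : i μ ≤ i ν
        · rw [if_pos hle, if_neg hne, Nat.choose_eq_zero_of_lt (by omega)]
          norm_num
        · rw [if_neg hle, if_neg hne]
    rw [hone, Matrix.det_one]
    exact zero_lt_one
  | succ n IH =>
    intro s i j hi hj h1 h2
    rw [BM_det_succ]
    apply Finset.sum_pos'
    · intro f _
      set k : Fin s → ℕ := fun μ => j μ + (f μ : ℕ) with hk
      have hkm : Monotone k := mono_add_bit j hj f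
      by_cases hinj : Function.Injective k
      · have hks : StrictMono k := hkm.strictMono_of_injective hinj
        by_cases hc1 : ∀ ν, k ν ≤ i ν
        · by_cases hc2 : ∀ ν, i ν ≤ k ν + n
          · exact (IH s i k hi hks hc1 hc2).le
          · push_neg at hc2
            obtain ⟨ν₀, hν₀⟩ := hc2
            rw [BM_det_zero_of_gt n i k hi.monotone hkm ν₀ hν₀]
        · push_neg at hc1
          obtain ⟨ν₀, hν₀⟩ := hc1
          rw [BM_det_zero_of_lt n i k hi.monotone hkm ν₀ hν₀]
      · rw [Function.not_injective_iff] at hinj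
        obtain ⟨a, b, hab, hne⟩ := hinj
        rw [Matrix.det_zero_of_column_eq hne (fun ν => by simp [BM, hab])]
    · refine ⟨fun μ => if j μ + n + 1 ≤ i μ then 1 else 0, Finset.mem_univ _, ?_⟩
      set k : Fin s → ℕ :=
        fun μ => j μ + (((if j μ + n + 1 ≤ i μ then 1 else 0 : Fin 2)) : ℕ) with hkdef
      have hkval : ∀ μ, k μ = if j μ + n + 1 ≤ i μ then j μ + 1 else j μ := by
        intro μ
        simp only [hkdef]
        split <;> rfl
      have hks : StrictMono k := by
        intro a b hab
        have hja : j a < j b := hj hab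
        have hia : i a < i b := hi hab
        rw [hkval a, hkval b]
        by_cases ha : j a + n + 1 ≤ i a <;> by_cases hb : j b + n + 1 ≤ i b <;>
          simp only [ha, hb, if_true, if_false, if_pos, if_neg] <;>
          first
            | omega
            | (have := h2 b; omega)
      have hc1 : ∀ ν, k ν ≤ i ν := by
        intro ν
        rw [hkval ν]
        have := h1 ν
        split <;> omega
      have hc2 : ∀ ν, i ν ≤ k ν + n := by
        intro ν
        rw [hkval ν]
        have := h2 ν
        split <;> omega
      have := IH s i k hi hks hc1 hc2
      convert this using 2

/-- Every proper submatrix of the `γ × γ` lower triangular Toeplitz matrix of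
binomial coefficients `binom(γ-1, r-c)` over `ℝ` has a strictly positive
determinant; in particular, this matrix is superregular over `ℝ`. -/
theorem binomial_matrix_totally_positive {γ : ℕ} (hγ : 1 ≤ γ)
    (B : Matrix (Fin γ) (Fin γ) ℝ)
    (hB : ∀ r c : Fin γ, B r c =
      if (c : ℕ) ≤ (r : ℕ) then (Nat.choose (γ - 1) ((r : ℕ) - (c : ℕ)) : ℝ)
      else 0) :
    (∀ (s : ℕ) (i j : Fin s → Fin γ), StrictMono i → StrictMono j →
      (∀ ν : Fin s, (j ν : ℕ) ≤ (i ν : ℕ)) → 0 < (B.submatrix i j).det) ∧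
    Superregular B := by
  have hpos : ∀ (s : ℕ) (i j : Fin s → Fin γ), StrictMono i → StrictMono j →
      (∀ ν : Fin s, (j ν : ℕ) ≤ (i ν : ℕ)) → 0 < (B.submatrix i j).det := by
    intro s i j hi hj hp
    have hsub : B.submatrix i j
        = BM (γ - 1) (fun ν => ((i ν : ℕ))) (fun μ => ((j μ : ℕ))) := by
      ext ν μ
      simp only [Matrix.submatrix_apply, BM, Matrix.of_apply, hB]
    rw [hsub]
    apply BM_det_pos
    · exact fun a b hab => hi hab
    · exact fun a b hab => hj hab
    · exact hp
    · intro ν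
      have h1 : (i ν : ℕ) < γ := (i ν).isLt
      omega
  refine ⟨hpos, ⟨⟨fun k => (Nat.choose (γ - 1) k : ℝ), hB⟩, ?_⟩⟩
  intro s i j hi hj hp
  exact (hpos s i j hi hj hp).ne'
end

section
/- Let γ ≥ 1. There exists a bound N such that for every prime p > N, the γ×γ matrix over the field ℤ/pℤ whose (r, c) entry is the residue of binom(γ−1, r−c) modulo p for r ≥ c (and 0 for r < c) is superregular. -/
/-
Over `ℤ`, Pascal's rule `binom(n + 1, d) = binom(n, d) + binom(n, d - 1)`, expanded
multilinearly in the rows, writes the minor of `(binom(n + 1, r - c))` with rows `i` and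
columns `j` as the sum over all ways `ε` of lowering some rows by one of the minors of
`(binom(n, r - c))` with rows `i - ε`. For strictly increasing `i` each such minor either has
two equal rows or is again of the same kind, so by induction on `n` all these minors are
nonnegative. If moreover `j ≤ i ≤ j + n + 1`, the summand with `i - ε = min(i, j + n)`
satisfies the same conditions for `n`, so the minor is at least `1`: at `n = 0` it is the
identity. A proper minor is therefore a positive integer, at most `s! (2ⁿ)ˢ`, hence nonzero
modulo any larger prime.
-/

open Matrix Function

def intChoose (n : ℕ) (d : ℤ) : ℤ := if 0 ≤ d then n.choose d.toNat else 0

lemma intChoose_zero (d : ℤ) : intChoose 0 d = if d = 0 then 1 else 0 := by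
  rcases lt_trichotomy d 0 with h | rfl | h
  · simp [intChoose, h.ne, h.not_ge]
  · simp [intChoose]
  · simp [intChoose, h.le, h.ne', Nat.choose_eq_zero_of_lt (Int.lt_toNat.mpr h)]

lemma intChoose_succ (n : ℕ) (d : ℤ) :
    intChoose (n + 1) d = intChoose n d + intChoose n (d - 1) := by
  unfold intChoose
  rcases lt_trichotomy d 0 with h | rfl | h
  · rw [if_neg (by omega), if_neg (by omega), if_neg (by omega), add_zero]
  · simp
  · obtain ⟨k, rfl⟩ : ∃ k : ℕ, d = k + 1 := ⟨(d - 1).toNat, by omega⟩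
    rw [if_pos (by omega), if_pos (by omega), if_pos (by omega), add_sub_cancel_right,
      ← Nat.cast_add_one, Int.toNat_natCast, Int.toNat_natCast, Nat.choose_succ_succ']
    push_cast
    ring

lemma intChoose_nonneg (n : ℕ) (d : ℤ) : 0 ≤ intChoose n d := by
  unfold intChoose; split <;> positivity

lemma intChoose_le_two_pow (n : ℕ) (d : ℤ) : intChoose n d ≤ 2 ^ n := by
  unfold intChoose
  split
  · exact_mod_cast Nat.choose_le_two_pow n d.toNat
  · positivity

def binomialMinor {s : ℕ} (n : ℕ) (i j : Fin s → ℤ) : Matrix (Fin s) (Fin s) ℤ :=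
  of fun μ ν => intChoose n (i μ - j ν)

section binomialMinor

variable {s : ℕ}

lemma det_binomialMinor_zero {i j : Fin s → ℤ} (hi : StrictMono i) (hj : StrictMono j) :
    (binomialMinor 0 i j).det = if i = j then 1 else 0 := by
  rw [det_apply, Finset.sum_eq_single 1]
  · simp [binomialMinor, intChoose_zero, sub_eq_zero, Finset.prod_boole, funext_iff]
  · intro σ _ hσ
    obtain ⟨μ, hμ⟩ : ∃ μ, i (σ μ) ≠ j μ := by
      by_contra! h
      have hσ_mono : StrictMono σ := fun a b hab =>
        hi.lt_iff_lt.mp (by rw [h a, h b]; exact hj hab)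
      exact hσ (Equiv.ext (congrFun hσ_mono.eq_id))
    rw [Finset.prod_eq_zero (Finset.mem_univ μ)] <;>
      simp [binomialMinor, intChoose_zero, sub_eq_zero, hμ]
  · simp

lemma det_binomialMinor_succ (n : ℕ) (i j : Fin s → ℤ) :
    (binomialMinor (n + 1) i j).det
      = ∑ ε : Fin s → Bool, (binomialMinor n (fun μ => i μ - (ε μ).toNat) j).det := by
  have hrows : binomialMinor (n + 1) i j
      = of fun μ => ∑ b : Bool, fun ν => intChoose n (i μ - b.toNat - j ν) := by
    ext μ ν
    simp [binomialMinor, intChoose_succ, sub_right_comm _ (1 : ℤ), add_comm]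
  rw [hrows]
  exact (detRowAlternating : (Fin s → ℤ) [⋀^Fin s]→ₗ[ℤ] ℤ).toMultilinearMap.map_sum
    fun μ (b : Bool) ν => intChoose n (i μ - b.toNat - j ν)

lemma det_binomialMinor_eq_zero_of_not_injective {n : ℕ} {i : Fin s → ℤ} (j : Fin s → ℤ)
    (hi : ¬ Injective i) : (binomialMinor n i j).det = 0 := by
  simp only [Injective, not_forall] at hi
  obtain ⟨a, b, hab, hne⟩ := hi
  exact det_zero_of_row_eq hne (funext fun ν => by simp [binomialMinor, hab])

lemma monotone_sub_toNat {i : Fin s → ℤ} (hi : StrictMono i) (ε : Fin s → Bool) :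
    Monotone fun μ => i μ - (ε μ).toNat := by
  intro a b hab
  rcases hab.lt_or_eq with h | rfl
  · have := hi h
    have : ((ε b).toNat : ℤ) ≤ 1 := by exact_mod_cast Bool.toNat_le (ε b)
    dsimp only
    omega
  · rfl

lemma det_binomialMinor_nonneg (n : ℕ) {i j : Fin s → ℤ} (hi : Monotone i)
    (hj : StrictMono j) :
    0 ≤ (binomialMinor n i j).det := by
  by_cases hinj : Injective i
  swap
  · exact (det_binomialMinor_eq_zero_of_not_injective j hinj).ge
  replace hi := hi.strictMono_of_injective hinj
  clear hinj
  induction n generalizing i with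
  | zero => rw [det_binomialMinor_zero hi hj]; split <;> norm_num
  | succ n ih =>
    rw [det_binomialMinor_succ]
    refine Finset.sum_nonneg fun ε _ => ?_
    by_cases hinj : Injective fun μ => i μ - (ε μ).toNat
    · exact ih ((monotone_sub_toNat hi ε).strictMono_of_injective hinj)
    · exact (det_binomialMinor_eq_zero_of_not_injective j hinj).ge

lemma one_le_det_binomialMinor (n : ℕ) {i j : Fin s → ℤ} (hi : StrictMono i)
    (hj : StrictMono j) (hji : ∀ ν, j ν ≤ i ν) (hij : ∀ ν, i ν ≤ j ν + n) :
    1 ≤ (binomialMinor n i j).det := by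
  induction n generalizing i with
  | zero =>
    obtain rfl : i = j := funext fun ν => le_antisymm (by simpa using hij ν) (hji ν)
    simp [det_binomialMinor_zero hi hi]
  | succ n ih =>
    set ε : Fin s → Bool := fun μ => decide (j μ + n < i μ)
    have hmin : ∀ μ, i μ - (ε μ).toNat = min (i μ) (j μ + n) := fun μ => by
      have := hij μ
      by_cases h : j μ + n < i μ <;>
        simp only [ε, h, decide_true, decide_false, Bool.toNat_true, Bool.toNat_false,
          Nat.cast_one, Nat.cast_zero] <;> omega
    have hmono : StrictMono fun μ => i μ - (ε μ).toNat := fun a b hab => by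
      have := hi hab; have := hj hab
      simp only [hmin]; omega
    rw [det_binomialMinor_succ]
    calc 1 ≤ (binomialMinor n (fun μ => i μ - (ε μ).toNat) j).det :=
          ih hmono (fun ν => by have := hji ν; simp only [hmin]; omega)
            (fun ν => by simp only [hmin]; omega)
      _ ≤ _ := Finset.single_le_sum (f := fun ε : Fin s → Bool =>
            (binomialMinor n (fun μ => i μ - (ε μ).toNat) j).det)
          (fun ε _ => det_binomialMinor_nonneg n (monotone_sub_toNat hi ε) hj)
          (Finset.mem_univ ε)

lemma abs_det_binomialMinor_le (n : ℕ) (i j : Fin s → ℤ) :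
    |(binomialMinor n i j).det| ≤ s.factorial * (2 ^ n) ^ s := by
  have hentry : ∀ μ ν, |binomialMinor n i j μ ν| ≤ 2 ^ n := fun μ ν => by
    rw [binomialMinor, of_apply, abs_of_nonneg (intChoose_nonneg _ _)]
    exact intChoose_le_two_pow _ _
  simpa using det_le (abv := AbsoluteValue.abs) hentry

end binomialMinor

lemma submatrix_binomial_toeplitz {R : Type*} [Ring R] (n : ℕ) {m s : ℕ}
    (i j : Fin s → Fin m) :
    (of fun r c : Fin m => if (c : ℕ) ≤ r then ((n.choose (r - c) : ℕ) : R) else 0).submatrix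
        i j
      = (binomialMinor n (fun μ => (i μ : ℤ)) (fun ν => (j ν : ℤ))).map (Int.cast) := by
  ext μ ν
  simp only [submatrix_apply, of_apply, map_apply, binomialMinor, intChoose, sub_nonneg]
  by_cases h : (j ν : ℕ) ≤ i μ
  · rw [if_pos h, if_pos (by exact_mod_cast h), ← Nat.cast_sub h, Int.toNat_natCast,
      Int.cast_natCast]
  · rw [if_neg h, if_neg (by exact_mod_cast h), Int.cast_zero]

theorem binomial_matrix_superregular_mod_large_prime_general {γ : ℕ} :
    ∃ N : ℕ, ∀ p : ℕ, p.Prime → N < p →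
      Superregular (Matrix.of fun r c : Fin γ =>
        if (c : ℕ) ≤ (r : ℕ) then
          ((Nat.choose (γ - 1) ((r : ℕ) - (c : ℕ)) : ℕ) : ZMod p)
        else 0) := by
  refine ⟨γ.factorial * (2 ^ (γ - 1)) ^ γ, fun p _ hNp =>
    ⟨⟨fun k => ((γ - 1).choose k : ZMod p), fun _ _ => rfl⟩, fun s i j hi hj hji => ?_⟩⟩
  set M := binomialMinor (γ - 1) (fun μ => (i μ : ℤ)) (fun ν => (j ν : ℤ))
  have hpos : 1 ≤ M.det := one_le_det_binomialMinor _
    (fun a b hab => by exact_mod_cast hi hab) (fun a b hab => by exact_mod_cast hj hab)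
    (fun ν => by exact_mod_cast hji ν) (fun ν => by have := (i ν).isLt; omega)
  have hs : s ≤ γ := by simpa using Fintype.card_le_of_injective i hi.injective
  have hlt : M.det < p := calc
    M.det ≤ s.factorial * (2 ^ (γ - 1)) ^ s := le_of_abs_le (abs_det_binomialMinor_le _ _ _)
    _ ≤ γ.factorial * (2 ^ (γ - 1)) ^ γ := by
      gcongr
      exact one_le_pow₀ one_le_two
    _ < p := by exact_mod_cast hNp
  rw [submatrix_binomial_toeplitz, ← Int.cast_det, Ne, ZMod.intCast_zmod_eq_zero_iff_dvd]
  exact fun hdvd => (Int.le_of_dvd hpos hdvd).not_gt hlt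

/-- There is a bound `N` such that for every prime `p > N`, the `γ × γ` lower
triangular Toeplitz matrix over `ℤ/pℤ` of binomial coefficients
`binom(γ-1, r-c) mod p` is superregular. -/
theorem binomial_matrix_superregular_mod_large_prime {γ : ℕ} (hγ : 1 ≤ γ) :
    ∃ N : ℕ, ∀ p : ℕ, p.Prime → N < p →
      Superregular (Matrix.of fun r c : Fin γ =>
        if (c : ℕ) ≤ (r : ℕ) then
          ((Nat.choose (γ - 1) ((r : ℕ) - (c : ℕ)) : ℕ) : ZMod p)
        else 0) :=
  binomial_matrix_superregular_mod_large_prime_general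
end

section
/- There is no 3×3 superregular matrix over the field F₂ with two elements. -/
/-- There is no `3 × 3` superregular matrix over the field `𝔽₂` with two
elements. -/
theorem no_superregular_3x3_over_F2 :
    ¬ ∃ A : Matrix (Fin 3) (Fin 3) (ZMod 2), Superregular A := by
  rintro ⟨A, ⟨a, ha⟩, hmin⟩
  have h1 : ∀ k : Fin 3, a (k : ℕ) ≠ 0 := by
    intro k hk
    have := hmin 1 (fun _ => k) (fun _ => 0)
      (Subsingleton.strictMono _) (Subsingleton.strictMono _)
      (fun ν => Nat.zero_le _)
    apply this
    simp [Matrix.det_fin_one, Matrix.submatrix_apply, ha, hk]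
  have hone : ∀ k : Fin 3, a (k : ℕ) = 1 := by
    intro k
    have h := h1 k
    revert h
    generalize a (k : ℕ) = x
    revert x
    decide
  have h2 := hmin 2 ![1, 2] ![0, 1] ?_ ?_ ?_
  · apply h2
    have e10 : A 1 0 = a 1 := by rw [ha]; norm_num
    have e21 : A 2 1 = a 1 := by rw [ha]; norm_num
    have e11 : A 1 1 = a 0 := by rw [ha]; norm_num
    have e20 : A 2 0 = a 2 := by rw [ha]; norm_num
    have ha0 := hone 0
    have ha1 := hone 1
    have ha2 := hone 2
    simp only [Fin.isValue, Fin.val_zero, Fin.val_one, Fin.val_two] at ha0 ha1 ha2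
    rw [Matrix.det_fin_two]
    simp [Matrix.submatrix_apply, e10, e21, e11, e20, ha0, ha1, ha2]
  · decide
  · decide
  · decide
end
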